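/- arXiv:math/0507485 — 5 statements merged into one kernel-verified Lean document; each statement's English description precedes it below -/
import Mathlib

section
/- (Björner) Let A be a set and let u ≤ w in subword order on A*. Then the Möbius function of the (locally finite) poset A* satisfies μ(u,w) = (−1)^{|w|−|u|} · (w choose u)_n, where (w choose u)_n is the number of normal embeddings of u into w. -/
/-!
Björner's formula for the Möbius function of subword order on `A*`.
Embeddings are words over `A ∪ {0}`, modelled by `Option α` with `none`
playing the role of the distinguished symbol `0`.
-/

/-- `η` is an embedding of `u` into `w` for subword order: a word of length
`|w|` over `A ∪ {0}` whose entries different from `0`, read left to right,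
form `u`, and with `η(i) = w(i)` for every `i` in the support of `η`. -/
def SwIsEmb {α : Type*} (u w : List α) (η : List (Option α)) : Prop :=
  η.length = w.length ∧
  η.reduceOption = u ∧
  ∀ (i : ℕ) (x : α), η[i]? = some (some x) → w[i]? = some x

/-- `[r,t]` is a run of `a`'s in the word `w`: a maximal interval of indices
on which `w` is constantly `a`. -/
def SwIsRun {α : Type*} (w : List α) (a : α) (r t : ℕ) : Prop :=
  r ≤ t ∧ t < w.length ∧ (∀ i, r ≤ i → i ≤ t → w[i]? = some a) ∧
  (r = 0 ∨ w[r - 1]? ≠ some a) ∧ (t + 1 = w.length ∨ w[t + 1]? ≠ some a)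

/-- A normal embedding of `u` into `w` for subword order: an embedding such
that for every `a ∈ A` and every run `[r,t]` of `a`'s in `w`, we have
`(r,t] ⊆ Supp η`. -/
def SwNormal {α : Type*} (u w : List α) (η : List (Option α)) : Prop :=
  SwIsEmb u w η ∧
  ∀ (a : α) (r t : ℕ), SwIsRun w a r t →
    ∀ i, r < i → i ≤ t → η[i]? ≠ some none

open scoped Classical

section Aux

variable {α : Type*}

/-- The finset of "normal markings" of `w`: words obtained from `w` by
replacing some run-start letters by `none`. -/
noncomputable def NM : List α → Finset (List (Option α))
  | [] => {[]}
  | a :: w =>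
      ((NM w).filter (fun η' => w.head? = some a → η'.head? ≠ some none)).image
        (fun η' => some a :: η')
      ∪ ((NM w).filter (fun η' => w.head? = some a → η'.head? ≠ some none)).image
        (fun η' => none :: η')

lemma mem_NM_nil (η : List (Option α)) : η ∈ NM ([] : List α) ↔ η = [] := by
  simp [NM]

lemma mem_NM_cons (a : α) (w : List α) (η : List (Option α)) :
    η ∈ NM (a :: w) ↔ ∃ η' ∈ NM w,
      (w.head? = some a → η'.head? ≠ some none) ∧
      (η = some a :: η' ∨ η = none :: η') := by
  simp only [NM, Finset.mem_union, Finset.mem_image, Finset.mem_filter]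
  constructor
  · rintro (⟨η', ⟨h1, h2⟩, rfl⟩ | ⟨η', ⟨h1, h2⟩, rfl⟩)
    · exact ⟨η', h1, h2, Or.inl rfl⟩
    · exact ⟨η', h1, h2, Or.inr rfl⟩
  · rintro ⟨η', h1, h2, (rfl | rfl)⟩
    · exact Or.inl ⟨η', ⟨h1, h2⟩, rfl⟩
    · exact Or.inr ⟨η', ⟨h1, h2⟩, rfl⟩

lemma NM_length_sublist {w : List α} {η : List (Option α)} (h : η ∈ NM w) :
    η.length = w.length ∧ η.reduceOption.Sublist w := by
  induction w generalizing η with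
  | nil => rw [mem_NM_nil] at h; subst h; simp
  | cons a w ih =>
      rw [mem_NM_cons] at h
      obtain ⟨η', h1, _, (rfl | rfl)⟩ := h
      · obtain ⟨hl, hs⟩ := ih h1
        exact ⟨by simp [hl], by simpa using (List.cons_sublist_cons (a := a)).2 hs⟩
      · obtain ⟨hl, hs⟩ := ih h1
        exact ⟨by simp [hl], by simpa using hs.trans (List.sublist_cons_self a w)⟩

lemma NM_pos {w : List α} {η : List (Option α)} (h : η ∈ NM w) :
    ∀ (i : ℕ) (x : α), η[i]? = some (some x) → w[i]? = some x := by
  induction w generalizing η with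
  | nil => rw [mem_NM_nil] at h; subst h; intro i x hx; simp at hx
  | cons a w ih =>
      rw [mem_NM_cons] at h
      obtain ⟨η', h1, _, (rfl | rfl)⟩ := h <;>
      · rintro (_ | i) x hx
        · simp_all
        · simp only [List.getElem?_cons_succ] at hx ⊢
          exact ih h1 i x hx

lemma NM_markish {w : List α} {η : List (Option α)} (h : η ∈ NM w) :
    ∀ (i : ℕ) (a : α), w[i]? = some a → w[i + 1]? = some a → η[i + 1]? ≠ some none := by
  induction w generalizing η with
  | nil => intro i a hw; simp at hw
  | cons b w ih =>
      rw [mem_NM_cons] at h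
      obtain ⟨η', h1, hc, (rfl | rfl)⟩ := h <;>
      · rintro (_ | i) a hw0 hw1
        · simp only [List.getElem?_cons_zero] at hw0
          simp only [List.getElem?_cons_succ] at hw1 ⊢
          obtain rfl : b = a := by simpa using hw0
          rw [← List.head?_eq_getElem?] at hw1
          rw [← List.head?_eq_getElem?]
          exact hc hw1
        · simp only [List.getElem?_cons_succ] at hw0 hw1 ⊢
          exact ih h1 i a hw0 hw1

lemma mem_NM_of {w : List α} {η : List (Option α)}
    (hl : η.length = w.length)
    (hp : ∀ (i : ℕ) (x : α), η[i]? = some (some x) → w[i]? = some x)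
    (hm : ∀ (i : ℕ) (a : α), w[i]? = some a → w[i + 1]? = some a → η[i + 1]? ≠ some none) :
    η ∈ NM w := by
  induction w generalizing η with
  | nil => rw [mem_NM_nil]; exact List.length_eq_zero_iff.1 hl
  | cons a w ih =>
      obtain (_ | ⟨o, η'⟩) := η
      · simp at hl
      rw [mem_NM_cons]
      refine ⟨η', ih (by simpa using hl)
        (fun i x hx => by simpa using hp (i+1) x (by simpa using hx))
        (fun i b h0 h1 => by
          simpa using hm (i+1) b (by simpa using h0) (by simpa using h1)), ?_, ?_⟩
      · intro hw
        have := hm 0 a (by simp) (by rw [List.getElem?_cons_succ, ← List.head?_eq_getElem?]; exact hw)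
        rw [List.getElem?_cons_succ, ← List.head?_eq_getElem?] at this
        exact this
      · rcases o with _ | x
        · exact Or.inr rfl
        · have := hp 0 x (by simp)
          simp only [List.getElem?_cons_zero, Option.some.injEq] at this
          subst this
          exact Or.inl rfl

lemma run_left (w : List α) (a : α) :
    ∀ i, w[i]? = some a → ∃ r, r ≤ i ∧ (∀ k, r ≤ k → k ≤ i → w[k]? = some a) ∧
      (r = 0 ∨ w[r - 1]? ≠ some a) := by
  intro i
  induction i with
  | zero =>
      intro h
      refine ⟨0, le_rfl, fun k h1 h2 => ?_, Or.inl rfl⟩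
      obtain rfl : k = 0 := by omega
      exact h
  | succ n ihn =>
      intro h
      by_cases hn : w[n]? = some a
      · obtain ⟨r, hr1, hr2, hr3⟩ := ihn hn
        refine ⟨r, by omega, fun k h1 h2 => ?_, hr3⟩
        rcases Nat.lt_or_ge k (n+1) with hk | hk
        · exact hr2 k h1 (by omega)
        · obtain rfl : k = n + 1 := by omega
          exact h
      · refine ⟨n+1, le_rfl, fun k h1 h2 => ?_, Or.inr (by simpa using hn)⟩
        obtain rfl : k = n + 1 := by omega
        exact h

lemma run_right (w : List α) (a : α) :
    ∀ (d i : ℕ), w.length - i ≤ d → w[i]? = some a →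
      ∃ t, i ≤ t ∧ t < w.length ∧ (∀ k, i ≤ k → k ≤ t → w[k]? = some a) ∧
        (t + 1 = w.length ∨ w[t + 1]? ≠ some a) := by
  intro d
  induction d with
  | zero =>
      intro i hd h
      have : i < w.length := List.getElem?_eq_some_iff.1 h |>.1
      omega
  | succ n ihn =>
      intro i hd h
      have hi : i < w.length := List.getElem?_eq_some_iff.1 h |>.1
      by_cases hs : w[i+1]? = some a
      · obtain ⟨t, ht1, ht2, ht3, ht4⟩ := ihn (i+1) (by omega) hs
        refine ⟨t, by omega, ht2, fun k h1 h2 => ?_, ht4⟩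
        rcases Nat.lt_or_ge i k with hk | hk
        · exact ht3 k (by omega) h2
        · obtain rfl : k = i := by omega
          exact h
      · refine ⟨i, le_rfl, hi, fun k h1 h2 => ?_, Or.inr hs⟩
        obtain rfl : k = i := by omega
        exact h

lemma swNormal_iff (u w : List α) (η : List (Option α)) :
    SwNormal u w η ↔ η ∈ NM w ∧ η.reduceOption = u := by
  constructor
  · rintro ⟨⟨hl, hr, hp⟩, hn⟩
    refine ⟨mem_NM_of hl hp ?_, hr⟩
    intro i a h0 h1
    obtain ⟨r, hr1, hr2, hr3⟩ := run_left w a i h0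
    obtain ⟨t, ht1, ht2, ht3, ht4⟩ := run_right w a (w.length) (i+1) (by omega) h1
    have hrun : SwIsRun w a r t := by
      refine ⟨by omega, ht2, fun k h1' h2' => ?_, hr3, ht4⟩
      rcases le_or_gt k i with hk | hk
      · exact hr2 k h1' hk
      · exact ht3 k (by omega) h2'
    exact hn a r t hrun (i+1) (by omega) (by omega)
  · rintro ⟨hm, rfl⟩
    obtain ⟨hl, _⟩ := NM_length_sublist hm
    refine ⟨⟨hl, rfl, NM_pos hm⟩, ?_⟩
    rintro a r t ⟨h1, h2, h3, h4, h5⟩ i hi1 hi2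
    have h0 : w[i-1]? = some a := h3 (i-1) (by omega) (by omega)
    have h1' : w[i]? = some a := h3 i (by omega) hi2
    have := NM_markish hm (i-1) a h0 (by rwa [Nat.sub_add_cancel (by omega)])
    rwa [Nat.sub_add_cancel (by omega)] at this

lemma sublist_cons_iff_of_ne {u v : List α} {x : α} (h : u.head? ≠ some x) :
    u.Sublist (x :: v) ↔ u.Sublist v := by
  constructor
  · intro hs
    cases u with
    | nil => simp
    | cons y u' =>
        cases hs with
        | cons _ h' => exact h'
        | cons_cons => simp at h
  · exact fun hs => hs.trans (List.sublist_cons_self x v)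

lemma exists_rep_decomp (a : α) (u : List α) :
    ∃ j u0, u = List.replicate j a ++ u0 ∧ u0.head? ≠ some a := by
  induction u with
  | nil => exact ⟨0, [], by simp, by simp⟩
  | cons x u ih =>
      by_cases hx : x = a
      · subst hx
        obtain ⟨j, u0, rfl, h0⟩ := ih
        exact ⟨j + 1, u0, by simp [List.replicate_succ], h0⟩
      · exact ⟨0, x :: u, by simp, by simpa using hx⟩

lemma strip_sublist (a : α) (u0 : List α) (hu0 : u0.head? ≠ some a) :
    ∀ (m j : ℕ) (v : List α),
      (List.replicate j a ++ u0).Sublist (List.replicate m a ++ v) ↔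
      (List.replicate (j - m) a ++ u0).Sublist v := by
  intro m
  induction m with
  | zero => intro j v; simp
  | succ n ihn =>
      intro j v
      rw [List.replicate_succ, List.cons_append]
      cases j with
      | zero =>
          rw [show (0:ℕ) - (n+1) = 0 - n by omega]
          rw [sublist_cons_iff_of_ne (by simpa using hu0), ihn 0 v]
      | succ j' =>
          rw [List.replicate_succ, List.cons_append, List.cons_sublist_cons,
            ihn j' v, Nat.succ_sub_succ]

lemma rep_decomp_eq_iff {a : α} {j k : ℕ} {u0 w0 : List α}
    (hu0 : u0.head? ≠ some a) (hw0 : w0.head? ≠ some a) :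
    List.replicate j a ++ u0 = List.replicate k a ++ w0 ↔ j = k ∧ u0 = w0 := by
  constructor
  · intro h
    induction j generalizing k with
    | zero =>
        cases k with
        | zero => simpa using h
        | succ k' =>
            simp only [List.replicate_succ, List.cons_append, List.replicate_zero,
              List.nil_append] at h
            rw [h] at hu0
            simp at hu0
    | succ j' ih =>
        cases k with
        | zero =>
            simp only [List.replicate_succ, List.cons_append, List.replicate_zero,
              List.nil_append] at h
            rw [← h] at hw0
            simp at hw0
        | succ k' =>
            simp only [List.replicate_succ, List.cons_append, List.cons.injEq] at h
            obtain ⟨j_eq, u_eq⟩ := ih h.2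
            exact ⟨by omega, u_eq⟩
  · rintro ⟨rfl, rfl⟩; rfl

lemma reduceOption_replicate_some (a : α) (m : ℕ) :
    (List.replicate m (some a)).reduceOption = List.replicate m a := by
  induction m with
  | zero => simp
  | succ n ih => simp [List.replicate_succ, ih]

lemma NM_cons (a : α) (w : List α) :
    NM (a :: w) =
      ((NM w).filter (fun η' => w.head? = some a → η'.head? ≠ some none)).image
        (fun η' => some a :: η')
      ∪ ((NM w).filter (fun η' => w.head? = some a → η'.head? ≠ some none)).image
        (fun η' => none :: η') := by
  rw [NM]

lemma NM_rep (a : α) (w' : List α) (hw' : w'.head? ≠ some a) :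
    ∀ k : ℕ, NM (List.replicate (k + 1) a ++ w') =
      (NM w').image (fun η => some a :: (List.replicate k (some a) ++ η))
      ∪ (NM w').image (fun η => none :: (List.replicate k (some a) ++ η)) := by
  intro k
  induction k with
  | zero =>
      simp only [List.replicate_succ, List.replicate_zero, List.nil_append, List.cons_append]
      rw [NM_cons]
      have : ((NM w').filter (fun η' => w'.head? = some a → η'.head?  ≠ some none)) = NM w' := by
        apply Finset.filter_true_of_mem
        intro η _ h
        exact absurd h hw'
      rw [this]
  | succ n ihn =>
      rw [List.replicate_succ, List.cons_append]
      rw [NM_cons]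
      have hhead : (List.replicate (n+1) a ++ w').head? = some a := by
        simp [List.replicate_succ]
      have hfil : ((NM (List.replicate (n+1) a ++ w')).filter
          (fun η' => (List.replicate (n+1) a ++ w').head? = some a → η'.head? ≠ some none)) =
          (NM w').image (fun η => some a :: (List.replicate n (some a) ++ η)) := by
        rw [ihn, Finset.filter_union]
        rw [Finset.filter_true_of_mem, Finset.filter_false_of_mem]
        · simp
        · intro η hη
          simp only [Finset.mem_image] at hη
          obtain ⟨η', _, rfl⟩ := hη
          simp [List.replicate_succ]
        · intro η hη
          simp only [Finset.mem_image] at hη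
          obtain ⟨η', _, rfl⟩ := hη
          simp [List.replicate_succ]
      rw [hfil, Finset.image_image, Finset.image_image]
      congr 1

lemma rep_append_eq_iff {a : α} {j : ℕ} {u0 w' : List α}
    (hu0 : u0.head? ≠ some a) (hw' : w'.head? ≠ some a) :
    List.replicate j a ++ u0 = w' ↔ j = 0 ∧ u0 = w' := by
  have h := rep_decomp_eq_iff (j := j) (k := 0) (a := a) hu0 hw'
  simpa using h

theorem sum_NM : ∀ (n : ℕ) (w : List α), w.length ≤ n → ∀ u : List α,
    (∑ η ∈ NM w, (-1:ℤ) ^ (w.length - η.reduceOption.length) *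
      (if u.Sublist η.reduceOption then 1 else 0)) = if u = w then 1 else 0 := by
  intro n
  induction n with
  | zero =>
      intro w hw u
      obtain rfl : w = [] := List.length_eq_zero_iff.1 (by omega)
      rw [show NM ([] : List α) = {[]} from rfl, Finset.sum_singleton]
      simp [List.sublist_nil]
  | succ n ih =>
      intro w hw u
      cases w with
      | nil =>
          rw [show NM ([] : List α) = {[]} from rfl, Finset.sum_singleton]
          simp [List.sublist_nil]
      | cons a w0 =>
        obtain ⟨k, w', hw0, hw'⟩ := exists_rep_decomp a w0
        have hwr : a :: w0 = List.replicate (k+1) a ++ w' := by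
          simp [List.replicate_succ, hw0]
        subst hw0
        rw [hwr] at hw ⊢
        obtain ⟨j, u0, hu, hu0⟩ := exists_rep_decomp a u
        have hlenw : (List.replicate (k+1) a ++ w').length = (k+1) + w'.length := by
          simp
        have hw'n : w'.length ≤ n := by rw [hlenw] at hw; omega
        rw [NM_rep a w' hw' k]
        have hinj1 : Set.InjOn (fun η => some a :: (List.replicate k (some a) ++ η))
            (NM w') := by
          intro x _ y _ hxy
          simpa using hxy
        have hinj2 : Set.InjOn (fun η => none :: (List.replicate k (some a) ++ η))
            (NM w') := by
          intro x _ y _ hxy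
          simpa using hxy
        have hdisj : Disjoint
            ((NM w').image (fun η => some a :: (List.replicate k (some a) ++ η)))
            ((NM w').image (fun η => none :: (List.replicate k (some a) ++ η))) := by
          rw [Finset.disjoint_left]
          rintro x hx1 hx2
          simp only [Finset.mem_image] at hx1 hx2
          obtain ⟨η1, _, rfl⟩ := hx1
          obtain ⟨η2, _, h⟩ := hx2
          simp at h
        rw [Finset.sum_union hdisj, Finset.sum_image hinj1, Finset.sum_image hinj2]
        have key1 : ∀ η ∈ NM w',
            (-1:ℤ) ^ ((List.replicate (k+1) a ++ w').length -
                (some a :: (List.replicate k (some a) ++ η)).reduceOption.length) *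
              (if u.Sublist (some a :: (List.replicate k (some a) ++ η)).reduceOption
                then 1 else 0)
            = (-1:ℤ) ^ (w'.length - η.reduceOption.length) *
              (if (List.replicate (j - (k+1)) a ++ u0).Sublist η.reduceOption
                then 1 else 0) := by
          intro η hη
          have hsub := (NM_length_sublist hη).2
          have hlen : η.reduceOption.length ≤ w'.length := hsub.length_le
          have hred : (some a :: (List.replicate k (some a) ++ η)).reduceOption
              = List.replicate (k+1) a ++ η.reduceOption := by
            rw [List.reduceOption_cons_of_some, List.reduceOption_append,
              reduceOption_replicate_some, List.replicate_succ, List.cons_append]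
          rw [hred]
          have hA : (List.replicate (k+1) a ++ w').length -
              (List.replicate (k+1) a ++ η.reduceOption).length
              = w'.length - η.reduceOption.length := by
            simp only [List.length_append, List.length_replicate]
            omega
          rw [hA, hu]
          simp only [strip_sublist a u0 hu0]
        have key2 : ∀ η ∈ NM w',
            (-1:ℤ) ^ ((List.replicate (k+1) a ++ w').length -
                (none :: (List.replicate k (some a) ++ η)).reduceOption.length) *
              (if u.Sublist (none :: (List.replicate k (some a) ++ η)).reduceOption
                then 1 else 0)
            = -((-1:ℤ) ^ (w'.length - η.reduceOption.length) *
              (if (List.replicate (j - k) a ++ u0).Sublist η.reduceOption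
                then 1 else 0)) := by
          intro η hη
          have hsub := (NM_length_sublist hη).2
          have hlen : η.reduceOption.length ≤ w'.length := hsub.length_le
          have hred : (none :: (List.replicate k (some a) ++ η)).reduceOption
              = List.replicate k a ++ η.reduceOption := by
            rw [List.reduceOption_cons_of_none, List.reduceOption_append,
              reduceOption_replicate_some]
          rw [hred]
          have hexp : (List.replicate (k+1) a ++ w').length -
              (List.replicate k a ++ η.reduceOption).length
              = (w'.length - η.reduceOption.length) + 1 := by
            simp only [List.length_append, List.length_replicate, hlenw]
            omega
          rw [hexp, pow_succ, hu]
          simp only [strip_sublist a u0 hu0]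
          ring
        rw [Finset.sum_congr rfl key1, Finset.sum_congr rfl key2, Finset.sum_neg_distrib]
        rw [ih w' hw'n (List.replicate (j - (k+1)) a ++ u0),
          ih w' hw'n (List.replicate (j - k) a ++ u0)]
        rw [hu]
        simp only [rep_append_eq_iff hu0 hw', rep_decomp_eq_iff hu0 hw']
        by_cases huw : u0 = w'
        · simp only [huw, and_true]
          split_ifs <;> omega
        · simp only [huw, and_false, if_false]
          norm_num

noncomputable def TT (u w : List α) : Finset (List α) :=
  (w.sublists.toFinset).filter (fun v => u.Sublist v)

lemma mem_TT {u w v : List α} : v ∈ TT u w ↔ u.Sublist v ∧ v.Sublist w := by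
  simp [TT, List.mem_sublists, and_comm]

lemma interval_eq_TT (u w : List α) :
    {v : List α | u.Sublist v ∧ v.Sublist w} = ↑(TT u w) := by
  ext v
  simp [mem_TT]

noncomputable def nu (v w : List α) : ℤ :=
  (-1 : ℤ) ^ (w.length - v.length) *
    (((NM w).filter (fun η => η.reduceOption = v)).card : ℤ)

lemma nu_eq_sum (v w : List α) :
    nu v w = ∑ η ∈ (NM w).filter (fun η => η.reduceOption = v),
      (-1 : ℤ) ^ (w.length - η.reduceOption.length) := by
  rw [nu, Finset.sum_congr rfl (fun η hη => ?_), Finset.sum_const, nsmul_eq_mul, mul_comm]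
  rw [(Finset.mem_filter.1 hη).2]

lemma nu_rec (u w : List α) :
    ∑ v ∈ TT u w, nu v w = if u = w then 1 else 0 := by
  classical
  set s := (NM w).filter (fun η => u.Sublist η.reduceOption) with hs
  have hmaps : ∀ η ∈ s, η.reduceOption ∈ TT u w := by
    intro η hη
    rw [Finset.mem_filter] at hη
    exact mem_TT.2 ⟨hη.2, (NM_length_sublist hη.1).2⟩
  have hfib : ∀ v ∈ TT u w,
      (NM w).filter (fun η => η.reduceOption = v) =
        s.filter (fun η => η.reduceOption = v) := by
    intro v hv
    have huv := (mem_TT.1 hv).1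
    rw [hs, Finset.filter_filter]
    apply Finset.filter_congr
    intro η _
    constructor
    · intro h; exact ⟨h ▸ huv, h⟩
    · exact fun h => h.2
  calc ∑ v ∈ TT u w, nu v w
      = ∑ v ∈ TT u w, ∑ η ∈ s.filter (fun η => η.reduceOption = v),
          (-1 : ℤ) ^ (w.length - η.reduceOption.length) := by
        refine Finset.sum_congr rfl (fun v hv => ?_)
        rw [nu_eq_sum, hfib v hv]
    _ = ∑ η ∈ s, (-1 : ℤ) ^ (w.length - η.reduceOption.length) :=
        Finset.sum_fiberwise_of_maps_to hmaps _
    _ = ∑ η ∈ NM w, (-1 : ℤ) ^ (w.length - η.reduceOption.length) *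
          (if u.Sublist η.reduceOption then 1 else 0) := by
        rw [hs, Finset.sum_filter]
        refine Finset.sum_congr rfl (fun η _ => ?_)
        split_ifs <;> ring
    _ = if u = w then 1 else 0 := sum_NM w.length w le_rfl u

lemma mu_eq_nu (μ : List α → List α → ℤ)
    (hμ : ∀ u w : List α, u.Sublist w →
      (∑ᶠ v ∈ {v : List α | u.Sublist v ∧ v.Sublist w}, μ v w) =
        if u = w then 1 else 0) :
    ∀ (n : ℕ) (u w : List α), u.Sublist w → w.length - u.length = n → μ u w = nu u w := by
  intro n
  induction n using Nat.strong_induction_on with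
  | _ n ih =>
      intro u w h hn
      have hsum : ∑ v ∈ TT u w, μ v w = ∑ v ∈ TT u w, nu v w := by
        rw [nu_rec, ← hμ u w h, interval_eq_TT, finsum_mem_coe_finset]
      have hu : u ∈ TT u w := mem_TT.2 ⟨List.Sublist.refl u, h⟩
      rw [← Finset.add_sum_erase _ _ hu, ← Finset.add_sum_erase _ _ hu] at hsum
      have herase : ∑ v ∈ (TT u w).erase u, μ v w = ∑ v ∈ (TT u w).erase u, nu v w := by
        refine Finset.sum_congr rfl (fun v hv => ?_)
        obtain ⟨hne, hv⟩ := Finset.mem_erase.1 hv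
        obtain ⟨huv, hvw⟩ := mem_TT.1 hv
        have hlt : u.length < v.length := by
          rcases Nat.lt_or_ge u.length v.length with h' | h'
          · exact h'
          · exact absurd (huv.eq_of_length (le_antisymm huv.length_le h')) (Ne.symm hne)
        exact ih (w.length - v.length)
          (by have := hvw.length_le; omega) v w hvw rfl
      omega


end Aux

/-- Björner: for `u ≤ w` in subword order on `A*`, the Möbius function (the
unique function satisfying the Möbius recurrence on the locally finite poset
`A*`) is given by `μ(u,w) = (-1)^{|w|-|u|} (w choose u)_n`, where
`(w choose u)_n` is the number of normal embeddings of `u` into `w`. -/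
theorem mobius_of_subword_order {α : Type*}
    (μ : List α → List α → ℤ)
    (hμ : ∀ u w : List α, u.Sublist w →
      (∑ᶠ v ∈ {v : List α | u.Sublist v ∧ v.Sublist w}, μ v w) =
        if u = w then 1 else 0)
    (u w : List α) (h : u.Sublist w) :
    μ u w = (-1 : ℤ) ^ (w.length - u.length) *
      (Set.ncard {η : List (Option α) | SwNormal u w η} : ℤ) := by
  have h1 := mu_eq_nu μ hμ (w.length - u.length) u w h rfl
  have h2 : {η : List (Option α) | SwNormal u w η} =
      ↑((NM w).filter (fun η => η.reduceOption = u)) := by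
    ext η
    simp only [Set.mem_setOf_eq, Finset.coe_filter, swNormal_iff]
  rw [h1, nu, h2, Set.ncard_coe_finset]
end

section
/- Let P be a rooted forest and let u ≤ w in generalized subword order on P*. Then the Möbius function of P* satisfies μ(u,w) = Σ_η (−1)^{d(η)}, where the sum ranges over all normal embeddings η of u into w. -/
/-!
Sagan–Vatter, Theorem "mobius-forest": the Möbius function of generalized
subword order over a rooted forest `P`.  The poset `P̂ = P ∪ {0̂}` is modelled
by `Option α`, with `none` playing the role of the adjoined minimum `0̂`.
For `x ∈ P`, the element `x⁻` (the unique element covered by `x` in `P̂`) is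
`0̂` when `x` is minimal in `P`, and otherwise is the unique `y ∈ P` with
`y ⋖ x`.
-/

/-- Generalized subword order on the set of finite words over a poset. -/
def GenLE {α : Type*} [PartialOrder α] (u w : List α) : Prop :=
  List.SublistForall₂ (· ≤ ·) u w

/-- `η` is an embedding of `u` into `w`: a word of length `|w|` over
`P̂ = P ∪ {0̂}` whose entries different from `0̂`, read left to right, form
`u`, and with `η(i) ≤_{P̂} w(i)` for all `i`. -/
def GIsEmb {α : Type*} [PartialOrder α] (u w : List α) (η : List (Option α)) : Prop :=
  η.length = w.length ∧
  η.reduceOption = u ∧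
  ∀ (i : ℕ) (x : α), η[i]? = some (some x) → ∃ y : α, w[i]? = some y ∧ x ≤ y

/-- `[r,t]` is a run of `x`'s in the word `w`. -/
def GIsRun {α : Type*} (w : List α) (x : α) (r t : ℕ) : Prop :=
  r ≤ t ∧ t < w.length ∧ (∀ i, r ≤ i → i ≤ t → w[i]? = some x) ∧
  (r = 0 ∨ w[r - 1]? ≠ some x) ∧ (t + 1 = w.length ∨ w[t + 1]? ≠ some x)

/-- A normal embedding of `u` into `w` over a rooted forest: an embedding such
that (1) each `η(i)` is `w(i)`, `w(i)⁻`, or `0̂` (here: `η(i)` is `w(i)`, or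
`0̂`, or an element covered by `w(i)` in `P`), and (2) for every `x ∈ P` and
every run `[r,t]` of `x`'s in `w`: `(r,t] ⊆ Supp η` if `x` is minimal in `P`,
and `r ∈ Supp η` otherwise. -/
def GNormal {α : Type*} [PartialOrder α] (u w : List α) (η : List (Option α)) : Prop :=
  GIsEmb u w η ∧
  (∀ (i : ℕ) (x : α), w[i]? = some x →
    η[i]? = some (some x) ∨ η[i]? = some none ∨
      ∃ y : α, η[i]? = some (some y) ∧ y ⋖ x) ∧
  ∀ (x : α) (r t : ℕ), GIsRun w x r t →
    (IsMin x → ∀ i, r < i → i ≤ t → η[i]? ≠ some none) ∧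
    (¬ IsMin x → η[r]? ≠ some none)

/-- `η(i) = w(i)⁻`: position `i` contributes to the defect. If `w(i)` is
minimal in `P` then `w(i)⁻ = 0̂`, i.e. `η(i) = 0̂`; otherwise `η(i)` is the
unique element of `P` covered by `w(i)`. -/
def GDefAt {α : Type*} [PartialOrder α] (w : List α) (η : List (Option α)) (i : ℕ) : Prop :=
  ∃ x : α, w[i]? = some x ∧
    ((IsMin x ∧ η[i]? = some none) ∨ ∃ y : α, η[i]? = some (some y) ∧ y ⋖ x)

/-- The defect `d(η) = #{i : η(i) = w(i)⁻}` of a normal embedding. -/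
noncomputable def gdefect {α : Type*} [PartialOrder α]
    (w : List α) (η : List (Option α)) : ℕ :=
  Nat.card {i : ℕ // GDefAt w η i}

open scoped Classical


/-! ### Auxiliary development -/

namespace SVAux

variable {α : Type*} [PartialOrder α]

/-! #### Basic lemmas on `GenLE` -/

theorem genle_nil (w : List α) : GenLE [] w := List.SublistForall₂.nil

theorem genle_nil_right {u : List α} (h : GenLE u []) : u = [] := by
  cases h; rfl

theorem genle_refl (u : List α) : GenLE u u := by
  induction u with
  | nil => exact List.SublistForall₂.nil
  | cons a u ih => exact List.SublistForall₂.cons le_rfl ih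

theorem genle_trans {u v w : List α} (h1 : GenLE u v) (h2 : GenLE v w) : GenLE u w :=
  IsTrans.trans (r := List.SublistForall₂ (· ≤ · : α → α → Prop)) u v w h1 h2

theorem genle_tail {d : α} {u v : List α} (h : GenLE (d :: u) v) : GenLE u v := by
  induction v with
  | nil => cases h
  | cons a v ih =>
    cases h with
    | cons hr h' => exact List.SublistForall₂.cons_right h'
    | cons_right h' => exact List.SublistForall₂.cons_right (ih h')

theorem genle_cons_right {a : α} {u v : List α} (h : GenLE u v) : GenLE u (a :: v) :=
  List.SublistForall₂.cons_right h

theorem genle_length {u v : List α} (h : GenLE u v) : u.length ≤ v.length := by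
  rcases List.sublistForall₂_iff.1 h with ⟨l, h1, h2⟩
  calc u.length = l.length := h1.length_eq
  _ ≤ v.length := h2.length_le

theorem genle_antisymm {u v : List α} (h1 : GenLE u v) (h2 : GenLE v u) : u = v := by
  rcases List.sublistForall₂_iff.1 h1 with ⟨l, hl1, hl2⟩
  have hlen : l = v := by
    apply hl2.eq_of_length
    have := genle_length h2
    have := hl1.length_eq
    have := hl2.length_le
    omega
  subst hlen
  rcases List.sublistForall₂_iff.1 h2 with ⟨m, hm1, hm2⟩
  have hmlen : m = u := by
    apply hm2.eq_of_length
    have := hl1.length_eq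
    have := hm1.length_eq
    omega
  subst hmlen
  -- now Forall₂ (≤) u v and Forall₂ (≤) v u
  clear h1 h2 hl2 hm2
  induction hl1 with
  | nil => rfl
  | cons hab h ih =>
    cases hm1 with
    | cons hba h' =>
      rw [le_antisymm hab hba, ih h']

theorem genle_mem {u w : List α} (h : GenLE u w) : ∀ x ∈ u, ∃ y ∈ w, x ≤ y := by
  induction h with
  | nil => intro x hx; cases hx
  | cons hr h ih =>
    intro x hx
    rcases List.mem_cons.1 hx with rfl | hx
    · exact ⟨_, List.mem_cons_self, hr⟩
    · rcases ih x hx with ⟨y, hy, hxy⟩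
      exact ⟨y, List.mem_cons_of_mem _ hy, hxy⟩
  | cons_right h ih =>
    intro x hx
    rcases ih x hx with ⟨y, hy, hxy⟩
    exact ⟨y, List.mem_cons_of_mem _ hy, hxy⟩

/-- Strip the head of `u` if it is `≤` the letter carried by `c`. -/
noncomputable def strip (u : List α) (c : Option α) : List α :=
  match c, u with
  | none, u => u
  | some _, [] => []
  | some b, d :: u' => if d ≤ b then u' else d :: u'

@[simp] theorem strip_none (u : List α) : strip u (none : Option α) = u := rfl

@[simp] theorem strip_nil (c : Option α) : strip ([] : List α) c = [] := by
  cases c <;> rfl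

theorem strip_cons_of_le {d b : α} {u : List α} (h : d ≤ b) :
    strip (d :: u) (some b) = u := by
  simp [strip, h]

theorem strip_cons_of_not_le {d b : α} {u : List α} (h : ¬ d ≤ b) :
    strip (d :: u) (some b) = d :: u := by
  simp [strip, h]

theorem genle_cons_iff {u v : List α} {b : α} :
    GenLE u (b :: v) ↔ GenLE (strip u (some b)) v := by
  constructor
  · intro h
    cases u with
    | nil => exact genle_nil v
    | cons d u' =>
      by_cases hdb : d ≤ b
      · rw [strip_cons_of_le hdb]
        cases h with
        | cons hr h' => exact h'
        | cons_right h' => exact genle_tail h'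
      · rw [strip_cons_of_not_le hdb]
        cases h with
        | cons hr h' => exact absurd hr hdb
        | cons_right h' => exact h'
  · intro h
    cases u with
    | nil => exact genle_nil _
    | cons d u' =>
      by_cases hdb : d ≤ b
      · rw [strip_cons_of_le hdb] at h
        exact List.SublistForall₂.cons hdb h
      · rw [strip_cons_of_not_le hdb] at h
        exact List.SublistForall₂.cons_right h

/-! #### Rooted forest lemmas -/

section Forest

variable (hforest : ∀ x : α, (Set.Iic x).Finite ∧ IsChain (· ≤ ·) (Set.Iic x))

theorem le_of_lt_of_covby (hf : ∀ x : α, (Set.Iic x).Finite ∧ IsChain (· ≤ ·) (Set.Iic x))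
    {y a z : α} (hy : y ⋖ a) (hz : z < a) : z ≤ y := by
  rcases eq_or_ne z y with rfl | hne
  · exact le_rfl
  have hcomp := (hf a).2 (Set.mem_Iic.2 hz.le) (Set.mem_Iic.2 hy.1.le) hne
  rcases hcomp with h | h
  · exact h
  · -- y ≤ z, y ≠ z so y < z < a contradicting y ⋖ a
    rcases lt_or_eq_of_le h with hlt | rfl
    · exact absurd hz (hy.2 hlt)
    · exact le_rfl

theorem covby_unique (hf : ∀ x : α, (Set.Iic x).Finite ∧ IsChain (· ≤ ·) (Set.Iic x))
    {y y' a : α} (h1 : y ⋖ a) (h2 : y' ⋖ a) : y = y' :=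
  le_antisymm (le_of_lt_of_covby hf h2 h1.1) (le_of_lt_of_covby hf h1 h2.1)

theorem exists_covby (hf : ∀ x : α, (Set.Iic x).Finite ∧ IsChain (· ≤ ·) (Set.Iic x))
    {a : α} (h : ¬ IsMin a) : ∃ y, y ⋖ a := by
  rcases not_isMin_iff.1 h with ⟨b, hb⟩
  have hfin : {z : α | z < a}.Finite := (hf a).1.subset fun z hz => Set.mem_Iic.2 (le_of_lt hz)
  rcases Set.Finite.exists_maximalFor id _ hfin ⟨b, hb⟩ with ⟨y, hy, hmax⟩
  refine ⟨y, hy, fun z hyz hza => ?_⟩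
  exact absurd (hmax hza hyz.le) (not_le_of_gt hyz)

theorem not_covby_of_isMin {a : α} (h : IsMin a) : ¬ ∃ y : α, y ⋖ a := by
  rintro ⟨y, hy⟩
  exact absurd (h hy.1.le) (not_le_of_gt hy.1)

/-- The unique element covered by `a`, as an `Option`. -/
noncomputable def below (a : α) : Option α :=
  if h : ∃ y, y ⋖ a then some h.choose else none

theorem below_spec {a : α} (h : ∃ y, y ⋖ a) : ∃ y, below a = some y ∧ y ⋖ a := by
  rw [below, dif_pos h]
  exact ⟨h.choose, rfl, h.choose_spec⟩

theorem below_of_isMin {a : α} (h : IsMin a) : below a = none := by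
  rw [below, dif_neg (not_covby_of_isMin h)]

end Forest

end SVAux


namespace SVAux

variable {α : Type*} [PartialOrder α]

/-! #### Local characterization of normal embeddings -/

/-- position with letter `a` and entry `c` is a defect position. -/
def dfAt (a : α) (c : Option α) : Prop :=
  (IsMin a ∧ c = none) ∨ ∃ y : α, c = some y ∧ y ⋖ a

/-- `c` is an allowed entry over letter `a`, with previous letter `p`. -/
def okAt (p : Option α) (a : α) (c : Option α) : Prop :=
  c = some a ∨ (∃ y : α, c = some y ∧ y ⋖ a) ∨ (c = none ∧ ¬ (p = some a ↔ IsMin a))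

/-- Normality as a letter-by-letter condition, with `p` the previous letter. -/
def LocalNormal : Option α → List α → List (Option α) → Prop
  | _, [], η => η = []
  | p, a :: w, η => ∃ c η', η = c :: η' ∧ okAt p a c ∧ LocalNormal (some a) w η'

@[simp] theorem localNormal_nil {p : Option α} {η} : LocalNormal p ([] : List α) η ↔ η = [] :=
  Iff.rfl

theorem localNormal_cons {p : Option α} {a : α} {w η} :
    LocalNormal p (a :: w) η ↔
      ∃ c η', η = c :: η' ∧ okAt p a c ∧ LocalNormal (some a) w η' := Iff.rfl

/-- The defect statistic, computed letter by letter. -/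
noncomputable def ldefect : List α → List (Option α) → ℕ
  | a :: w, c :: η => (if dfAt a c then 1 else 0) + ldefect w η
  | _, _ => 0

@[simp] theorem ldefect_nil (η : List (Option α)) : ldefect ([] : List α) η = 0 := rfl

@[simp] theorem ldefect_nil' (w : List α) : ldefect w ([] : List (Option α)) = 0 := by
  cases w <;> rfl

theorem ldefect_cons (a : α) (w : List α) (c : Option α) (η) :
    ldefect (a :: w) (c :: η) = (if dfAt a c then 1 else 0) + ldefect w η := rfl

/-- The previous letter before position `i`. -/
def prevAt (p : Option α) (w : List α) (i : ℕ) : Option α :=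
  if i = 0 then p else w[i-1]?

@[simp] theorem prevAt_zero (p : Option α) (w : List α) : prevAt p w 0 = p := rfl

theorem prevAt_succ (p : Option α) (w : List α) (i : ℕ) :
    prevAt p w (i+1) = w[i]? := rfl

theorem prevAt_cons (a : α) (p : Option α) (w : List α) (i : ℕ) :
    prevAt (some a) w i = prevAt p (a :: w) (i+1) := by
  cases i with
  | zero => simp [prevAt]
  | succ j => simp [prevAt]

theorem localNormal_iff {p : Option α} {w : List α} {η : List (Option α)} :
    LocalNormal p w η ↔ (η.length = w.length ∧
      ∀ i a c, w[i]? = some a → η[i]? = some c → okAt (prevAt p w i) a c) := by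
  induction w generalizing p η with
  | nil =>
    simp only [localNormal_nil, List.length_nil, List.length_eq_zero_iff]
    constructor
    · rintro rfl; exact ⟨rfl, by simp⟩
    · rintro ⟨h, -⟩; exact h
  | cons a w ih =>
    rw [localNormal_cons]
    constructor
    · rintro ⟨c, η', rfl, hok, hln⟩
      rcases ih.1 hln with ⟨hlen, hpos⟩
      refine ⟨by simp [hlen], ?_⟩
      intro i a' c' hw hη
      cases i with
      | zero =>
        simp only [List.getElem?_cons_zero, Option.some_inj] at hw hη
        subst hw; subst hη
        simpa using hok
      | succ j =>
        simp only [List.getElem?_cons_succ] at hw hη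
        have := hpos j a' c' hw hη
        rwa [prevAt_cons a p] at this
    · rintro ⟨hlen, hpos⟩
      cases η with
      | nil => simp at hlen
      | cons c η' =>
        refine ⟨c, η', rfl, ?_, ?_⟩
        · have := hpos 0 a c (by simp) (by simp)
          simpa using this
        · refine ih.2 ⟨by simpa using hlen, ?_⟩
          intro j a' c' hw hη
          have := hpos (j+1) a' c' (by simpa using hw) (by simpa using hη)
          rwa [← prevAt_cons a p] at this

theorem localNormal_length {p : Option α} {w : List α} {η : List (Option α)}
    (h : LocalNormal p w η) : η.length = w.length :=
  (localNormal_iff.1 h).1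

/-! #### Runs -/

theorem run_exists {w : List α} {a : α} {i : ℕ} (h : w[i]? = some a) :
    ∃ r t, GIsRun w a r t ∧ r ≤ i ∧ i ≤ t ∧ (i ≠ 0 → w[i-1]? = some a → r < i) := by
  have hi : i < w.length := by
    rcases List.getElem?_eq_some_iff.1 h with ⟨h', -⟩; exact h'
  -- find the end of the run
  have hPex : ∃ n, ¬ (w[i+n+1]? = some a) := by
    refine ⟨w.length, ?_⟩
    rw [List.getElem?_eq_none (by omega)]
    simp
  classical
  set k := Nat.find hPex with hk
  have hkspec : ¬ (w[i+k+1]? = some a) := Nat.find_spec hPex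
  have hkmin : ∀ m, m < k → w[i+m+1]? = some a := by
    intro m hm
    have := Nat.find_min hPex hm
    simpa using this
  have hup : ∀ m, m ≤ k → w[i+m]? = some a := by
    intro m hm
    cases m with
    | zero => simpa using h
    | succ m' => exact hkmin m' (by omega)
  -- find the start of the run
  have hQex : ∃ n, (i - n = 0 ∨ ¬ (w[i-n-1]? = some a)) := ⟨i, Or.inl (by omega)⟩
  set l := Nat.find hQex with hl
  have hlspec : i - l = 0 ∨ ¬ (w[i-l-1]? = some a) := Nat.find_spec hQex
  have hlmin : ∀ m, m < l → (i - m ≠ 0 ∧ w[i-m-1]? = some a) := by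
    intro m hm
    have := Nat.find_min hQex hm
    push_neg at this
    exact this
  have hli : l ≤ i := by
    by_contra hc
    push_neg at hc
    have := hlmin i hc
    omega
  have hdown : ∀ m, m ≤ l → w[i-m]? = some a := by
    intro m hm
    induction m with
    | zero => simpa using h
    | succ m' ihm =>
      have h2 := hlmin m' (by omega)
      have : i - (m'+1) = i - m' - 1 := by omega
      rw [this]
      exact h2.2
  refine ⟨i - l, i + k, ?_, by omega, by omega, ?_⟩
  · refine ⟨by omega, ?_, ?_, ?_, ?_⟩
    · have := hup k le_rfl
      rcases List.getElem?_eq_some_iff.1 this with ⟨h', -⟩; exact h'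
    · intro j hj1 hj2
      rcases le_or_gt j i with hji | hji
      · have : j = i - (i - j) := by omega
        rw [this]
        exact hdown (i - j) (by omega)
      · have : j = i + (j - i) := by omega
        rw [this]
        exact hup (j - i) (by omega)
    · rcases hlspec with h1 | h1
      · exact Or.inl h1
      · exact Or.inr (by simpa using h1)
    · exact Or.inr hkspec
  · intro hi0 hiprev
    have : l ≠ 0 := by
      intro h0
      rw [h0] at hlspec
      rcases hlspec with h1 | h1
      · omega
      · simp only [Nat.sub_zero] at h1
        exact h1 hiprev
    omega

/-! #### Equivalence with `GNormal` -/

theorem gnormal_localNormal {u w : List α} {η : List (Option α)} (h : GNormal u w η) :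
    LocalNormal none w η ∧ η.reduceOption = u := by
  obtain ⟨⟨hlen, hred, hemb⟩, hone, hrun⟩ := h
  refine ⟨localNormal_iff.2 ⟨hlen, ?_⟩, hred⟩
  intro i a c hw hη
  rcases hone i a hw with h1 | h1 | h1
  · rw [hη] at h1
    exact Or.inl (Option.some_inj.1 h1)
  · rw [hη] at h1
    have hc : c = none := Option.some_inj.1 h1
    subst hc
    refine Or.inr (Or.inr ⟨rfl, ?_⟩)
    rcases run_exists hw with ⟨r, t, hrt, hri, hit, hstart⟩
    by_cases hp : prevAt none w i = some a
    · -- interior: previous letter is `a`; must not be minimal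
      rw [iff_iff_implies_and_implies]
      rintro ⟨himp, -⟩
      have hmin := himp hp
      have hi0 : i ≠ 0 := by
        intro h0; rw [h0] at hp; simp [prevAt] at hp
      have hprev : w[i-1]? = some a := by
        rw [prevAt, if_neg hi0] at hp; exact hp
      have hri' := hstart hi0 hprev
      exact (hrun a r t hrt).1 hmin i hri' hit hη
    · -- start: must be minimal
      have hri'' : r = i := by
        rcases Nat.lt_or_ge r i with hlt | hge
        · exfalso
          apply hp
          have hi0 : i ≠ 0 := by omega
          rw [prevAt, if_neg hi0]
          exact hrt.2.2.1 (i-1) (by omega) (by omega)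
        · omega
      intro hiff
      have hmin' : ¬ IsMin a := fun hm => hp (hiff.2 hm)
      exact (hrun a r t hrt).2 hmin' (hri'' ▸ hη)
  · rcases h1 with ⟨y, hy, hcov⟩
    rw [hη] at hy
    exact Or.inr (Or.inl ⟨y, Option.some_inj.1 hy, hcov⟩)

theorem localNormal_gnormal {w : List α} {η : List (Option α)}
    (h : LocalNormal none w η) : GNormal η.reduceOption w η := by
  rcases localNormal_iff.1 h with ⟨hlen, hpos⟩
  have hw_of_i : ∀ (i : ℕ) (c : Option α), η[i]? = some c → ∃ a, w[i]? = some a := by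
    intro i c hc
    rcases List.getElem?_eq_some_iff.1 hc with ⟨hi, -⟩
    rw [hlen] at hi
    exact ⟨w[i]'hi, by rw [List.getElem?_eq_getElem hi]⟩
  have hη_of_i : ∀ (i : ℕ) (a : α), w[i]? = some a → ∃ c, η[i]? = some c := by
    intro i a ha
    rcases List.getElem?_eq_some_iff.1 ha with ⟨hi, -⟩
    rw [← hlen] at hi
    exact ⟨η[i]'hi, by rw [List.getElem?_eq_getElem hi]⟩
  refine ⟨⟨hlen, rfl, ?_⟩, ?_, ?_⟩
  · intro i x hx
    rcases hw_of_i i (some x) hx with ⟨a, ha⟩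
    rcases hpos i a (some x) ha hx with h1 | h1 | h1
    · refine ⟨a, ha, ?_⟩
      rw [Option.some_inj.1 h1]
    · rcases h1 with ⟨y, hy, hcov⟩
      refine ⟨a, ha, ?_⟩
      rw [Option.some_inj.1 hy]
      exact hcov.1.le
    · simp at h1
  · intro i x hx
    rcases hη_of_i i x hx with ⟨c, hc⟩
    rcases hpos i x c hx hc with h1 | h1 | h1
    · subst h1; exact Or.inl hc
    · rcases h1 with ⟨y, hy, hcov⟩
      subst hy
      exact Or.inr (Or.inr ⟨y, hc, hcov⟩)
    · rcases h1 with ⟨h1, -⟩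
      subst h1
      exact Or.inr (Or.inl hc)
  · intro x r t hrt
    constructor
    · intro hmin i hri hit hη
      have hwi : w[i]? = some x := hrt.2.2.1 i (by omega) hit
      have hne : prevAt none w i = some x := by
        have : i ≠ 0 := by omega
        rw [prevAt, if_neg this]
        exact hrt.2.2.1 (i-1) (by omega) (by omega)
      have := hpos i x none hwi hη
      rcases this with h1 | h1 | h1
      · simp at h1
      · rcases h1 with ⟨y, hy, -⟩; simp at hy
      · rcases h1 with ⟨-, h1⟩
        exact h1 (iff_of_true hne hmin)
    · intro hmin hη
      have hwr : w[r]? = some x := hrt.2.2.1 r le_rfl hrt.1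
      have hne : prevAt none w r ≠ some x := by
        rcases hrt.2.2.2.1 with h1 | h1
        · rw [h1]; simp [prevAt]
        · rw [prevAt]
          by_cases h0 : r = 0
          · rw [if_pos h0]; simp
          · rw [if_neg h0]; exact h1
      have := hpos r x none hwr hη
      rcases this with h1 | h1 | h1
      · simp at h1
      · rcases h1 with ⟨y, hy, -⟩; simp at hy
      · rcases h1 with ⟨-, h1⟩
        exact h1 (iff_of_false hne hmin)

/-! #### `gdefect` equals `ldefect` -/

theorem gdefAt_zero {a : α} {w : List α} {c : Option α} {η} :
    GDefAt (a :: w) (c :: η) 0 ↔ dfAt a c := by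
  simp [GDefAt, dfAt]

theorem gdefAt_succ {a : α} {w : List α} {c : Option α} {η} {i : ℕ} :
    GDefAt (a :: w) (c :: η) (i+1) ↔ GDefAt w η i := by
  simp [GDefAt]

theorem gdefAt_lt {w : List α} {η} {i : ℕ} (h : GDefAt w η i) : i < w.length := by
  rcases h with ⟨x, hx, -⟩
  rcases List.getElem?_eq_some_iff.1 hx with ⟨h', -⟩
  exact h'

theorem gdefect_eq : ∀ (w : List α) (η : List (Option α)), gdefect w η = ldefect w η := by
  have hcoe : ∀ (w : List α) (η : List (Option α)),
      gdefect w η = ({i | GDefAt w η i} : Set ℕ).ncard := by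
    intro w η
    rw [gdefect, ← Nat.card_coe_set_eq]
    rfl
  intro w
  induction w with
  | nil =>
    intro η
    rw [hcoe, ldefect_nil]
    convert Set.ncard_empty ℕ using 2
    ext i
    simp [GDefAt]
  | cons a w ih =>
    intro η
    cases η with
    | nil =>
      rw [hcoe, ldefect_nil']
      convert Set.ncard_empty ℕ using 2
      ext i
      simp only [Set.mem_setOf_eq, Set.mem_empty_iff_false, iff_false]
      rintro ⟨x, -, h | h⟩
      · rcases h with ⟨-, h⟩; simp at h
      · rcases h with ⟨y, h, -⟩; simp at h
    | cons c η' =>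
      rw [hcoe, ldefect_cons]
      have hfin : ({i | GDefAt w η' i} : Set ℕ).Finite :=
        Set.Finite.subset (Set.finite_Iio w.length) (fun i hi => gdefAt_lt hi)
      have himg : ({i | GDefAt (a::w) (c::η') i} : Set ℕ) =
          (if dfAt a c then insert 0 (Nat.succ '' {i | GDefAt w η' i})
            else (Nat.succ '' {i | GDefAt w η' i})) := by
        ext i
        by_cases hd : dfAt a c <;> simp only [if_pos, if_neg, hd, Set.mem_insert_iff,
          Set.mem_image, Set.mem_setOf_eq]
        · cases i with
          | zero => simp [gdefAt_zero.2 hd]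
          | succ j =>
            simp only [gdefAt_succ]
            constructor
            · intro h; exact Or.inr ⟨j, h, rfl⟩
            · rintro (h | ⟨j', h, hj⟩)
              · omega
              · have : j' = j := by omega
                subst this; exact h
        · cases i with
          | zero =>
            simp only [gdefAt_zero]
            constructor
            · intro h; exact absurd h hd
            · rintro ⟨j, -, hj⟩; omega
          | succ j =>
            simp only [gdefAt_succ]
            constructor
            · intro h; exact ⟨j, h, rfl⟩
            · rintro ⟨j', h, hj⟩
              have : j' = j := by omega
              subst this; exact h
      rw [himg]
      have hinj : Function.Injective (Nat.succ : ℕ → ℕ) := fun x y h => by omega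
      by_cases hd : dfAt a c
      · rw [if_pos hd, Set.ncard_insert_of_notMem (by simp) (hfin.image _),
          Set.ncard_image_of_injective _ hinj, if_pos hd, ← hcoe, ih η']
        omega
      · rw [if_neg hd, Set.ncard_image_of_injective _ hinj, if_neg hd, ← hcoe, ih η']
        omega

end SVAux


namespace SVAux

variable {α : Type*} [PartialOrder α]

/-! #### Finiteness -/

theorem finite_lists {β : Type*} {s : Set β} (hs : s.Finite) :
    ∀ n : ℕ, {l : List β | l.length ≤ n ∧ ∀ x ∈ l, x ∈ s}.Finite := by
  intro n
  induction n with
  | zero =>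
    apply Set.Finite.subset (Set.finite_singleton ([] : List β))
    rintro l ⟨h1, -⟩
    simp [List.length_eq_zero_iff.1 (Nat.le_zero.1 h1)]
  | succ n ih =>
    apply Set.Finite.subset
      ((Set.finite_singleton ([] : List β)).union
        (Set.Finite.image (fun p : β × List β => p.1 :: p.2) (hs.prod ih)))
    rintro l ⟨h1, h2⟩
    cases l with
    | nil => exact Or.inl rfl
    | cons x l' =>
      refine Or.inr ⟨⟨x, l'⟩, ⟨h2 x (List.mem_cons_self), ?_, ?_⟩, rfl⟩
      · simpa using Nat.succ_le_succ_iff.1 h1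
      · exact fun y hy => h2 y (List.mem_cons_of_mem _ hy)

theorem localNormal_entries {p : Option α} {w : List α} {η : List (Option α)}
    (h : LocalNormal p w η) :
    ∀ c ∈ η, c = none ∨ ∃ b, c = some b ∧ ∃ a ∈ w, b ≤ a := by
  induction w generalizing p η with
  | nil => rw [localNormal_nil] at h; subst h; intro c hc; cases hc
  | cons a w ih =>
    rcases h with ⟨c, η', rfl, hok, hln⟩
    intro c' hc'
    rcases List.mem_cons.1 hc' with rfl | hc'
    · rcases hok with h1 | h1 | h1
      · exact Or.inr ⟨a, h1, a, List.mem_cons_self, le_rfl⟩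
      · rcases h1 with ⟨y, hy, hcov⟩
        exact Or.inr ⟨y, hy, a, List.mem_cons_self, hcov.1.le⟩
      · exact Or.inl h1.1
    · rcases ih hln c' hc' with h1 | ⟨b, hb, a', ha', hba⟩
      · exact Or.inl h1
      · exact Or.inr ⟨b, hb, a', List.mem_cons_of_mem _ ha', hba⟩

theorem genle_reduceOption_base {p : Option α} {w : List α} {η : List (Option α)}
    (h : LocalNormal p w η) : GenLE η.reduceOption w := by
  induction w generalizing p η with
  | nil => rw [localNormal_nil] at h; subst h; exact genle_nil _
  | cons a w ih =>
    rcases h with ⟨c, η', rfl, hok, hln⟩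
    cases c with
    | none =>
      rw [List.reduceOption_cons_of_none]
      exact genle_cons_right (ih hln)
    | some b =>
      rw [List.reduceOption_cons_of_some]
      have hba : b ≤ a := by
        rcases hok with h1 | h1 | h1
        · rw [Option.some_inj.1 h1]
        · rcases h1 with ⟨y, hy, hcov⟩
          rw [Option.some_inj.1 hy]; exact hcov.1.le
        · simp at h1
      exact List.SublistForall₂.cons hba (ih hln)

/-- The set of "normal embeddings into `w` with previous letter `p`" whose
reduction dominates `u`. -/
def Tset (p : Option α) (u w : List α) : Set (List (Option α)) :=
  {η | LocalNormal p w η ∧ GenLE u η.reduceOption}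

section WithForest

variable (hf : ∀ x : α, (Set.Iic x).Finite ∧ IsChain (· ≤ ·) (Set.Iic x))

include hf in
theorem Tset_finite (p : Option α) (u w : List α) : (Tset p u w).Finite := by
  have hsfin : ({b : α | ∃ a ∈ w, b ≤ a}).Finite := by
    have : ({b : α | ∃ a ∈ w, b ≤ a}) = ⋃ a ∈ {a | a ∈ w}, Set.Iic a := by
      ext b; simp [Set.mem_iUnion]
    rw [this]
    exact Set.Finite.biUnion (w.finite_toSet) (fun a _ => (hf a).1)
  have hs'fin : (insert none (some '' {b : α | ∃ a ∈ w, b ≤ a}) :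
      Set (Option α)).Finite := (hsfin.image _).insert _
  apply Set.Finite.subset (finite_lists hs'fin w.length)
  rintro η ⟨hln, -⟩
  refine ⟨le_of_eq (localNormal_length hln), ?_⟩
  intro c hc
  rcases localNormal_entries hln c hc with h1 | ⟨b, hb, ha⟩
  · exact h1 ▸ Set.mem_insert _ _
  · exact hb ▸ Set.mem_insert_of_mem _ ⟨b, ha, rfl⟩

/-- The same set, as a `Finset`. -/
noncomputable def TF (p : Option α) (u w : List α) : Finset (List (Option α)) :=
  (Tset_finite hf p u w).toFinset

theorem mem_TF {p : Option α} {u w : List α} {η : List (Option α)} :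
    η ∈ TF hf p u w ↔ LocalNormal p w η ∧ GenLE u η.reduceOption := by
  rw [TF, Set.Finite.mem_toFinset]; exact Iff.rfl

/-- The signed sum over normal embeddings. -/
noncomputable def F (p : Option α) (u w : List α) : ℤ :=
  ∑ η ∈ TF hf p u w, (-1 : ℤ) ^ ldefect w η

theorem F_nil (p : Option α) (u : List α) :
    F hf p u [] = if u = [] then 1 else 0 := by
  by_cases hu : u = []
  · rw [if_pos hu]
    have : TF hf p u [] = {([] : List (Option α))} := by
      ext η
      rw [mem_TF]
      subst hu
      simp only [localNormal_nil, Finset.mem_singleton]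
      constructor
      · rintro ⟨rfl, -⟩; rfl
      · rintro rfl; exact ⟨rfl, genle_nil _⟩
    rw [F, this, Finset.sum_singleton, ldefect_nil, pow_zero]
  · rw [if_neg hu]
    have : TF hf p u [] = ∅ := by
      ext η
      rw [mem_TF]
      simp only [localNormal_nil, Finset.notMem_empty, iff_false]
      rintro ⟨rfl, hle⟩
      exact hu (genle_nil_right (by simpa using hle))
    rw [F, this, Finset.sum_empty]

/-- The finite set of allowed entries over letter `a` with previous letter `p`. -/
noncomputable def Cset (p : Option α) (a : α) : Finset (Option α) :=
  if p = some a then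
    (if IsMin a then {some a} else {none, below a, some a})
  else
    (if IsMin a then {none, some a} else {below a, some a})

include hf in
theorem below_eq_iff {a : α} (hmin : ¬ IsMin a) {c : Option α} :
    (∃ y, c = some y ∧ y ⋖ a) ↔ c = below a := by
  rcases below_spec (exists_covby hf hmin) with ⟨y₀, hy₀, hcov₀⟩
  constructor
  · rintro ⟨y, rfl, hcov⟩
    rw [hy₀, covby_unique hf hcov hcov₀]
  · rintro rfl
    exact ⟨y₀, hy₀, hcov₀⟩

theorem not_exists_covby_of_isMin {a : α} (hmin : IsMin a) :
    ¬ ∃ y : α, y ⋖ a := not_covby_of_isMin hmin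

include hf in
theorem okAt_mem {p : Option α} {a : α} {c : Option α} :
    okAt p a c ↔ c ∈ Cset p a := by
  rw [okAt, Cset]
  by_cases hp : p = some a
  · rw [if_pos hp]
    by_cases hmin : IsMin a
    · rw [if_pos hmin]
      simp only [Finset.mem_singleton]
      constructor
      · rintro (h | ⟨y, -, hcov⟩ | ⟨-, h⟩)
        · exact h
        · exact absurd ⟨y, hcov⟩ (not_covby_of_isMin hmin)
        · exact absurd (iff_of_true hp hmin) h
      · intro h; exact Or.inl h
    · rw [if_neg hmin]
      simp only [Finset.mem_insert, Finset.mem_singleton]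
      constructor
      · rintro (h | h | ⟨h, -⟩)
        · exact Or.inr (Or.inr h)
        · exact Or.inr (Or.inl ((below_eq_iff hf hmin).1 h))
        · exact Or.inl h
      · rintro (h | h | h)
        · exact Or.inr (Or.inr ⟨h, fun hi => hmin (hi.1 hp)⟩)
        · exact Or.inr (Or.inl ((below_eq_iff hf hmin).2 h))
        · exact Or.inl h
  · rw [if_neg hp]
    by_cases hmin : IsMin a
    · rw [if_pos hmin]
      simp only [Finset.mem_insert, Finset.mem_singleton]
      constructor
      · rintro (h | ⟨y, -, hcov⟩ | ⟨h, -⟩)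
        · exact Or.inr h
        · exact absurd ⟨y, hcov⟩ (not_covby_of_isMin hmin)
        · exact Or.inl h
      · rintro (h | h)
        · exact Or.inr (Or.inr ⟨h, fun hi => hp (hi.2 hmin)⟩)
        · exact Or.inl h
    · rw [if_neg hmin]
      simp only [Finset.mem_insert, Finset.mem_singleton]
      constructor
      · rintro (h | h | ⟨-, h⟩)
        · exact Or.inr h
        · exact Or.inl ((below_eq_iff hf hmin).1 h)
        · exact absurd (iff_of_false hp hmin) h
      · rintro (h | h)
        · exact Or.inr (Or.inl ((below_eq_iff hf hmin).2 h))
        · exact Or.inl h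

theorem dfAt_some_self {a : α} : ¬ dfAt a (some a) := by
  rintro (⟨-, h⟩ | ⟨y, hy, hcov⟩)
  · simp at h
  · rw [Option.some_inj.1 hy] at hcov
    exact lt_irrefl _ hcov.1

theorem dfAt_none_iff {a : α} : dfAt a (none : Option α) ↔ IsMin a := by
  constructor
  · rintro (⟨h, -⟩ | ⟨y, hy, -⟩)
    · exact h
    · simp at hy
  · intro h; exact Or.inl ⟨h, rfl⟩

include hf in
theorem dfAt_below {a : α} (hmin : ¬ IsMin a) : dfAt a (below a) := by
  rcases below_spec (exists_covby hf hmin) with ⟨y₀, hy₀, hcov₀⟩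
  rw [hy₀]
  exact Or.inr ⟨y₀, rfl, hcov₀⟩

include hf in
theorem below_ne_some_self {a : α} (hmin : ¬ IsMin a) : below a ≠ some a := by
  rcases below_spec (exists_covby hf hmin) with ⟨y₀, hy₀, hcov₀⟩
  rw [hy₀]
  intro h
  rw [Option.some_inj.1 h] at hcov₀
  exact lt_irrefl a hcov₀.1

include hf in
theorem below_ne_none {a : α} (hmin : ¬ IsMin a) : below a ≠ none := by
  rcases below_spec (exists_covby hf hmin) with ⟨y₀, hy₀, -⟩
  rw [hy₀]; simp

/-- Decomposition of the embedding set by the first entry. -/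
theorem TF_cons (p : Option α) (u : List α) (a : α) (w : List α) :
    TF hf p u (a :: w) =
      (Cset p a).biUnion
        (fun c => (TF hf (some a) (strip u c) w).image (c :: ·)) := by
  ext η
  rw [mem_TF, Finset.mem_biUnion]
  constructor
  · rintro ⟨⟨c, η', rfl, hok, hln⟩, hle⟩
    refine ⟨c, okAt_mem hf |>.1 hok, ?_⟩
    rw [Finset.mem_image]
    refine ⟨η', ?_, rfl⟩
    rw [mem_TF]
    refine ⟨hln, ?_⟩
    cases c with
    | none => rwa [strip_none, ← List.reduceOption_cons_of_none η']
    | some b =>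
      rw [← genle_cons_iff, ← List.reduceOption_cons_of_some]
      exact hle
  · rintro ⟨c, hc, hη⟩
    rw [Finset.mem_image] at hη
    rcases hη with ⟨η', hη', rfl⟩
    rw [mem_TF] at hη'
    refine ⟨⟨c, η', rfl, okAt_mem hf |>.2 hc, hη'.1⟩, ?_⟩
    cases c with
    | none => rw [List.reduceOption_cons_of_none]; exact hη'.2
    | some b =>
      rw [List.reduceOption_cons_of_some, genle_cons_iff]
      exact hη'.2

theorem F_cons (p : Option α) (u : List α) (a : α) (w : List α) :
    F hf p u (a :: w) =
      ∑ c ∈ Cset p a,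
        (if dfAt a c then (-1 : ℤ) else 1) * F hf (some a) (strip u c) w := by
  have hdisj : (↑(Cset p a) : Set (Option α)).PairwiseDisjoint
      (fun c => (TF hf (some a) (strip u c) w).image (c :: ·)) := by
    intro c1 _ c2 _ hne
    apply Finset.disjoint_left.2
    intro η h1 h2
    simp only [Finset.mem_image] at h1 h2
    rcases h1 with ⟨x, -, rfl⟩
    rcases h2 with ⟨y, -, heq⟩
    exact hne ((List.cons_eq_cons.1 heq).1.symm)
  rw [F, TF_cons hf, Finset.sum_biUnion hdisj]
  apply Finset.sum_congr rfl
  intro c _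
  rw [Finset.sum_image (fun x _ y _ h => (List.cons_eq_cons.1 h).2), F, Finset.mul_sum]
  apply Finset.sum_congr rfl
  intro η' _
  rw [ldefect_cons, pow_add]
  by_cases hd : dfAt a c
  · rw [if_pos hd, if_pos hd, pow_one]
  · rw [if_neg hd, if_neg hd, pow_zero]

end WithForest

end SVAux


namespace SVAux

variable {α : Type*} [PartialOrder α]

/-! #### Evaluation of `F` -/

/-- The auxiliary relation: `w` is `u` with some copies of the previous letter
prepended. -/
def Rel (p : Option α) (u w : List α) : Prop :=
  u = w ∨ ∃ (x : α) (j : ℕ), p = some x ∧ w = List.replicate (j+1) x ++ u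

theorem rel_nil {p : Option α} {u : List α} : Rel p u [] ↔ u = [] := by
  constructor
  · rintro (h | ⟨x, j, -, h⟩)
    · exact h
    · rw [List.replicate_succ] at h; simp at h
  · rintro rfl; exact Or.inl rfl

theorem rel_some {a : α} {u w : List α} :
    Rel (some a) u w ↔ ∃ j, w = List.replicate j a ++ u := by
  constructor
  · rintro (h | ⟨x, j, hx, hw⟩)
    · exact ⟨0, by simp [h]⟩
    · exact ⟨j+1, by rw [← Option.some_inj.1 hx] at hw; exact hw⟩
  · rintro ⟨j, hj⟩
    cases j with
    | zero => exact Or.inl (by simpa using hj.symm)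
    | succ k => exact Or.inr ⟨a, k, rfl, hj⟩

theorem rel_start {p : Option α} {a : α} {u w : List α} (hp : ¬ p = some a) :
    Rel p u (a :: w) ↔ u = a :: w := by
  constructor
  · rintro (h | ⟨x, j, hx, hw⟩)
    · exact h
    · exfalso
      rw [List.replicate_succ, List.cons_append, List.cons.injEq] at hw
      rw [← hw.1] at hx
      exact hp hx
  · exact Or.inl

theorem rep_cons_comm (j : ℕ) (a : α) (u : List α) :
    List.replicate j a ++ (a :: u) = List.replicate (j+1) a ++ u := by
  rw [List.replicate_succ' (n := j) (a := a), List.append_assoc]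
  rfl

theorem exists_rep_head {a : α} {w u : List α} (h : u.head? ≠ some a) :
    (∃ j, a :: w = List.replicate j a ++ u) ↔ (∃ j, w = List.replicate j a ++ u) := by
  constructor
  · rintro ⟨j, hj⟩
    cases j with
    | zero =>
      exfalso
      apply h
      simp only [List.replicate_zero, List.nil_append] at hj
      rw [← hj]
      rfl
    | succ k =>
      rw [List.replicate_succ, List.cons_append, List.cons.injEq] at hj
      exact ⟨k, hj.2⟩
  · rintro ⟨j, hj⟩
    exact ⟨j+1, by rw [List.replicate_succ, List.cons_append, hj]⟩

theorem exists_rep_cons {a : α} {w u' : List α} :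
    (∃ j, a :: w = List.replicate j a ++ (a :: u')) ↔
      (∃ j, w = List.replicate j a ++ u') := by
  constructor
  · rintro ⟨j, hj⟩
    cases j with
    | zero =>
      simp only [List.replicate_zero, List.nil_append, List.cons_eq_cons] at hj
      exact ⟨0, by rw [List.replicate_zero, List.nil_append, hj.2]⟩
    | succ k =>
      rw [List.replicate_succ, List.cons_append, List.cons.injEq] at hj
      exact ⟨k+1, by rw [hj.2, rep_cons_comm]⟩
  · rintro ⟨j, hj⟩
    refine ⟨j, ?_⟩
    rw [hj, rep_cons_comm, List.replicate_succ, List.cons_append]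

theorem exists_rep_shift {a : α} {w u' : List α} :
    (∃ j, w = List.replicate j a ++ (a :: u')) ↔
      (∃ j, w = List.replicate (j+1) a ++ u') := by
  constructor
  · rintro ⟨j, hj⟩; exact ⟨j, by rw [hj, rep_cons_comm]⟩
  · rintro ⟨j, hj⟩; exact ⟨j, by rw [hj, rep_cons_comm]⟩

/-- The key cancellation: `[∃ j ≥ 0] - [∃ j ≥ 1] = [j = 0 case]`. -/
theorem bracket_sub {a : α} {w u' : List α} :
    (if (∃ j, w = List.replicate j a ++ u') then (1 : ℤ) else 0) -
      (if (∃ j, w = List.replicate (j+1) a ++ u') then (1 : ℤ) else 0) =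
      (if u' = w then (1 : ℤ) else 0) := by
  by_cases h0 : u' = w
  · rw [if_pos h0, if_pos ⟨0, by simp [h0]⟩, if_neg]
    · ring
    · rintro ⟨j, hj⟩
      rw [← h0] at hj
      have h1 := congrArg List.length hj
      simp [List.length_replicate] at h1
  · rw [if_neg h0]
    have hiff : (∃ j, w = List.replicate j a ++ u') ↔
        (∃ j, w = List.replicate (j+1) a ++ u') := by
      constructor
      · rintro ⟨j, hj⟩
        cases j with
        | zero => exact absurd (by simp only [List.replicate_zero, List.nil_append] at hj; exact hj.symm) h0
        | succ k => exact ⟨k, hj⟩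
      · rintro ⟨j, hj⟩; exact ⟨j+1, hj⟩
    by_cases h1 : ∃ j, w = List.replicate j a ++ u'
    · rw [if_pos h1, if_pos (hiff.1 h1)]; ring
    · rw [if_neg h1, if_neg (fun h => h1 (hiff.2 h))]; ring

section WithForest

variable (hf : ∀ x : α, (Set.Iic x).Finite ∧ IsChain (· ≤ ·) (Set.Iic x))

include hf in
theorem Feval : ∀ (w : List α) (p : Option α) (u : List α),
    F hf p u w = if Rel p u w then 1 else 0 := by
  intro w
  induction w with
  | nil =>
    intro p u
    rw [F_nil]
    exact if_congr rel_nil.symm rfl rfl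
  | cons a w ih =>
    intro p u
    rw [F_cons hf, Cset]
    by_cases hp : p = some a
    · -- interior position
      rw [if_pos hp, hp]
      by_cases hmin : IsMin a
      · -- interior, minimal: only choice `some a`
        rw [if_pos hmin, Finset.sum_singleton, if_neg dfAt_some_self, one_mul, ih]
        simp only [rel_some]
        rcases u with - | ⟨d, u'⟩
        · rw [strip_nil]
          exact if_congr (exists_rep_head (by simp)).symm rfl rfl
        · by_cases hda : d ≤ a
          · have hd : d = a := le_antisymm hda (hmin hda)
            subst hd
            rw [strip_cons_of_le le_rfl]
            exact if_congr exists_rep_cons.symm rfl rfl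
          · rw [strip_cons_of_not_le hda]
            refine if_congr (exists_rep_head ?_).symm rfl rfl
            simp only [List.head?_cons, Ne, Option.some_inj]
            exact fun hh => hda (le_of_eq hh)
      · -- interior, non-minimal: choices `none`, `below a`, `some a`
        rcases below_spec (exists_covby hf hmin) with ⟨y₀, hy₀, hcov₀⟩
        rw [if_neg hmin]
        rw [Finset.sum_insert (by
            simp only [Finset.mem_insert, Finset.mem_singleton]
            push_neg
            exact ⟨fun h => below_ne_none hf hmin h.symm, by simp⟩),
          Finset.sum_insert (by
            simp only [Finset.mem_singleton]
            exact below_ne_some_self hf hmin),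
          Finset.sum_singleton]
        rw [if_neg (fun h => hmin (dfAt_none_iff.1 h)), one_mul,
          if_pos (dfAt_below hf hmin), if_neg dfAt_some_self, one_mul,
          strip_none, hy₀, ih, ih, ih]
        simp only [rel_some]
        rcases u with - | ⟨d, u'⟩
        · rw [strip_nil, strip_nil,
            if_congr (exists_rep_head (show ([] : List α).head? ≠ some a by simp)) rfl rfl]
          ring
        · by_cases hda : d ≤ a
          · by_cases hdeq : d = a
            · subst hdeq
              rw [strip_cons_of_le le_rfl,
                strip_cons_of_not_le (fun h => absurd (lt_of_le_of_lt h hcov₀.1) (lt_irrefl d)),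
                if_congr exists_rep_cons rfl rfl]
              ring
            · have hdy : d ≤ y₀ := le_of_lt_of_covby hf hcov₀ (lt_of_le_of_ne hda hdeq)
              rw [strip_cons_of_le hda, strip_cons_of_le hdy,
                if_congr (exists_rep_head (show (d :: u').head? ≠ some a by
                  simpa using hdeq)) rfl rfl]
              ring
          · have hdy : ¬ d ≤ y₀ := fun h => hda (h.trans hcov₀.1.le)
            rw [strip_cons_of_not_le hda, strip_cons_of_not_le hdy,
              if_congr (exists_rep_head (show (d :: u').head? ≠ some a by
                simp only [List.head?_cons, Ne, Option.some_inj]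
                exact fun h => hda (le_of_eq h))) rfl rfl]
            ring
    · -- start position
      rw [if_neg hp, rel_start hp]
      by_cases hmin : IsMin a
      · -- start, minimal: choices `none` (defect) and `some a`
        rw [if_pos hmin,
          Finset.sum_insert (by simp),
          Finset.sum_singleton,
          if_pos (dfAt_none_iff.2 hmin), if_neg dfAt_some_self, one_mul,
          strip_none, ih, ih]
        rcases u with - | ⟨d, u'⟩
        · rw [strip_nil, if_neg (by simp : ¬ ([] : List α) = a :: w)]
          ring
        · by_cases hda : d ≤ a
          · have hd : d = a := le_antisymm hda (hmin hda)
            subst hd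
            rw [strip_cons_of_le le_rfl]
            simp only [rel_some]
            rw [if_congr (exists_rep_shift (a := d) (w := w) (u' := u')) rfl rfl]
            simp only [List.cons.injEq, true_and]
            have hb := @bracket_sub α _ d w u'
            linarith
          · rw [strip_cons_of_not_le hda,
              if_neg (show ¬ (d :: u' = a :: w) by
                intro h
                rw [List.cons_eq_cons] at h
                exact hda (le_of_eq h.1))]
            ring
      · -- start, non-minimal: choices `below a` (defect) and `some a`
        rcases below_spec (exists_covby hf hmin) with ⟨y₀, hy₀, hcov₀⟩
        rw [if_neg hmin,
          Finset.sum_insert (by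
            simp only [Finset.mem_singleton]
            exact below_ne_some_self hf hmin),
          Finset.sum_singleton,
          if_pos (dfAt_below hf hmin), if_neg dfAt_some_self, one_mul, hy₀, ih, ih]
        rcases u with - | ⟨d, u'⟩
        · rw [strip_nil, strip_nil, if_neg (by simp : ¬ ([] : List α) = a :: w)]
          ring
        · by_cases hda : d ≤ a
          · by_cases hdeq : d = a
            · subst hdeq
              rw [strip_cons_of_le le_rfl,
                strip_cons_of_not_le (fun h => absurd (lt_of_le_of_lt h hcov₀.1) (lt_irrefl d))]
              simp only [rel_some]
              rw [if_congr (exists_rep_shift (a := d) (w := w) (u' := u')) rfl rfl]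
              simp only [List.cons.injEq, true_and]
              have hb := @bracket_sub α _ d w u'
              linarith
            · have hdy : d ≤ y₀ := le_of_lt_of_covby hf hcov₀ (lt_of_le_of_ne hda hdeq)
              rw [strip_cons_of_le hda, strip_cons_of_le hdy,
                if_neg (show ¬ (d :: u' = a :: w) by
                  intro h
                  rw [List.cons_eq_cons] at h
                  exact hdeq h.1)]
              ring
          · have hdy : ¬ d ≤ y₀ := fun h => hda (h.trans hcov₀.1.le)
            rw [strip_cons_of_not_le hda, strip_cons_of_not_le hdy,
              if_neg (show ¬ (d :: u' = a :: w) by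
                intro h
                rw [List.cons_eq_cons] at h
                exact hda (le_of_eq h.1))]
            ring

end WithForest

end SVAux


namespace SVAux

variable {α : Type*} [PartialOrder α]

/-! #### Assembly -/

theorem rel_none {u w : List α} : Rel (none : Option α) u w ↔ u = w := by
  constructor
  · rintro (h | ⟨x, j, hx, -⟩)
    · exact h
    · simp at hx
  · exact Or.inl

/-- The set of normal embeddings with prescribed reduction. -/
def Nset (u w : List α) : Set (List (Option α)) :=
  {η | LocalNormal none w η ∧ η.reduceOption = u}

section WithForest

variable (hf : ∀ x : α, (Set.Iic x).Finite ∧ IsChain (· ≤ ·) (Set.Iic x))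

include hf in
theorem Nset_finite (u w : List α) : (Nset u w).Finite :=
  (Tset_finite hf none u w).subset (by
    rintro η ⟨h1, h2⟩
    exact ⟨h1, h2 ▸ genle_refl _⟩)

noncomputable def NF (u w : List α) : Finset (List (Option α)) :=
  (Nset_finite hf u w).toFinset

theorem mem_NF {u w : List α} {η : List (Option α)} :
    η ∈ NF hf u w ↔ LocalNormal none w η ∧ η.reduceOption = u := by
  rw [NF, Set.Finite.mem_toFinset]; exact Iff.rfl

theorem gnormal_set_eq (u w : List α) : {η | GNormal u w η} = Nset u w := by
  ext η
  constructor
  · intro h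
    exact gnormal_localNormal h
  · rintro ⟨h1, h2⟩
    have := localNormal_gnormal h1
    rwa [h2] at this

include hf in
theorem Ssum_eq (u w : List α) :
    (∑ᶠ η ∈ {η : List (Option α) | GNormal u w η}, (-1 : ℤ) ^ gdefect w η) =
      ∑ η ∈ NF hf u w, (-1 : ℤ) ^ ldefect w η := by
  rw [gnormal_set_eq, ← Set.Finite.coe_toFinset (Nset_finite hf u w),
    finsum_mem_coe_finset]
  apply Finset.sum_congr rfl
  intro η _
  rw [gdefect_eq]

include hf in
theorem interval_finite (u w : List α) :
    {v : List α | GenLE u v ∧ GenLE v w}.Finite := by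
  have hsfin : ({b : α | ∃ a ∈ w, b ≤ a}).Finite := by
    have : ({b : α | ∃ a ∈ w, b ≤ a}) = ⋃ a ∈ {a | a ∈ w}, Set.Iic a := by
      ext b; simp [Set.mem_iUnion]
    rw [this]
    exact Set.Finite.biUnion (w.finite_toSet) (fun a _ => (hf a).1)
  apply Set.Finite.subset (finite_lists hsfin w.length)
  rintro v ⟨-, hvw⟩
  exact ⟨genle_length hvw, genle_mem hvw⟩

noncomputable def Ifin (u w : List α) : Finset (List α) :=
  (interval_finite hf u w).toFinset

theorem mem_Ifin {u w v : List α} :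
    v ∈ Ifin hf u w ↔ GenLE u v ∧ GenLE v w := by
  rw [Ifin, Set.Finite.mem_toFinset]; exact Iff.rfl

theorem TF_biUnion (u w : List α) :
    TF hf none u w = (Ifin hf u w).biUnion (fun v => NF hf v w) := by
  ext η
  rw [mem_TF, Finset.mem_biUnion]
  constructor
  · rintro ⟨h1, h2⟩
    refine ⟨η.reduceOption, ?_, ?_⟩
    · exact mem_Ifin hf |>.2 ⟨h2, genle_reduceOption_base h1⟩
    · exact mem_NF hf |>.2 ⟨h1, rfl⟩
  · rintro ⟨v, hv, hη⟩
    rcases mem_NF hf |>.1 hη with ⟨h1, h2⟩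
    rcases mem_Ifin hf |>.1 hv with ⟨h3, -⟩
    exact ⟨h1, h2 ▸ h3⟩

include hf in
theorem key_identity (u w : List α) :
    (∑ v ∈ Ifin hf u w, ∑ η ∈ NF hf v w, (-1 : ℤ) ^ ldefect w η) =
      if u = w then 1 else 0 := by
  have hdisj : (↑(Ifin hf u w) : Set (List α)).PairwiseDisjoint (fun v => NF hf v w) := by
    intro v1 _ v2 _ hne
    apply Finset.disjoint_left.2
    intro η h1 h2
    rcases mem_NF hf |>.1 h1 with ⟨-, e1⟩
    rcases mem_NF hf |>.1 h2 with ⟨-, e2⟩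
    exact hne (e1 ▸ e2 ▸ rfl)
  rw [← Finset.sum_biUnion hdisj, ← TF_biUnion hf]
  have : (∑ η ∈ TF hf none u w, (-1 : ℤ) ^ ldefect w η) = F hf none u w := rfl
  rw [this, Feval hf]
  exact if_congr rel_none rfl rfl

end WithForest

end SVAux

/-- Sagan–Vatter: let `P` be a rooted forest (every principal order ideal is a
finite chain).  For `u ≤ w` in generalized subword order on `P*`, the Möbius
function (the unique function satisfying the Möbius recurrence on the locally
finite poset `P*`) is given by `μ(u,w) = Σ_η (-1)^{d(η)}`, summed over all
normal embeddings `η` of `u` into `w`. -/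
theorem mobius_of_generalized_subword_order_rooted_forest
    {α : Type*} [PartialOrder α]
    (hforest : ∀ x : α, (Set.Iic x).Finite ∧ IsChain (· ≤ ·) (Set.Iic x))
    (μ : List α → List α → ℤ)
    (hμ : ∀ u w : List α, GenLE u w →
      (∑ᶠ v ∈ {v : List α | GenLE u v ∧ GenLE v w}, μ v w) =
        if u = w then 1 else 0)
    (u w : List α) (h : GenLE u w) :
    μ u w =
      ∑ᶠ η ∈ {η : List (Option α) | GNormal u w η}, (-1 : ℤ) ^ gdefect w η := by
  classical
  rw [SVAux.Ssum_eq hforest u w]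
  have key : ∀ (n : ℕ) (u : List α), (SVAux.Ifin hforest u w).card ≤ n → GenLE u w →
      μ u w = ∑ η ∈ SVAux.NF hforest u w, (-1 : ℤ) ^ SVAux.ldefect w η := by
    intro n
    induction n with
    | zero =>
      intro u hcard hu
      exfalso
      have : u ∈ SVAux.Ifin hforest u w :=
        SVAux.mem_Ifin hforest |>.2 ⟨SVAux.genle_refl u, hu⟩
      have := Finset.card_pos.2 ⟨u, this⟩
      omega
    | succ n ihn =>
      intro u hcard hu
      have hmemu : u ∈ SVAux.Ifin hforest u w :=
        SVAux.mem_Ifin hforest |>.2 ⟨SVAux.genle_refl u, hu⟩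
      have hμ' : (∑ v ∈ SVAux.Ifin hforest u w, μ v w) = if u = w then 1 else 0 := by
        have h1 := hμ u w hu
        rwa [← Set.Finite.coe_toFinset (SVAux.interval_finite hforest u w),
          finsum_mem_coe_finset] at h1
      have hS := SVAux.key_identity hforest u w
      rw [← Finset.add_sum_erase _ _ hmemu] at hμ' hS
      have herase : ∀ v ∈ (SVAux.Ifin hforest u w).erase u,
          μ v w = ∑ η ∈ SVAux.NF hforest v w, (-1 : ℤ) ^ SVAux.ldefect w η := by
        intro v hv
        rcases Finset.mem_erase.1 hv with ⟨hvne, hvmem⟩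
        rcases SVAux.mem_Ifin hforest |>.1 hvmem with ⟨huv, hvw⟩
        apply ihn v ?_ hvw
        have hsub : SVAux.Ifin hforest v w ⊆ (SVAux.Ifin hforest u w).erase u := by
          intro z hz
          rcases SVAux.mem_Ifin hforest |>.1 hz with ⟨hvz, hzw⟩
          rw [Finset.mem_erase]
          constructor
          · rintro rfl
            exact hvne (SVAux.genle_antisymm huv hvz).symm
          · exact SVAux.mem_Ifin hforest |>.2 ⟨SVAux.genle_trans huv hvz, hzw⟩
        have h2 := Finset.card_le_card hsub
        have h3 := Finset.card_erase_of_mem hmemu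
        omega
      have hsum : (∑ v ∈ (SVAux.Ifin hforest u w).erase u, μ v w) =
          ∑ v ∈ (SVAux.Ifin hforest u w).erase u,
            ∑ η ∈ SVAux.NF hforest v w, (-1 : ℤ) ^ SVAux.ldefect w η :=
        Finset.sum_congr rfl herase
      rw [hsum] at hμ'
      linarith
  exact key (SVAux.Ifin hforest u w).card u le_rfl h
end

section
/- (Same Length Lemma) Suppose u ≤ w in the composition poset ℙ* with |u| = |w| = n, and set m_i = w(i) − u(i) for 1 ≤ i ≤ n. Then every v with u ≤ v ≤ w satisfies |v| = n and u(i) ≤ v(i) ≤ w(i) for all i, and the interval [u,w] is order-isomorphic to the product of chains ∏_{i=1}^{n} {0,1,…,m_i}; consequently the maximal chains of [u,w] are in bijection with the permutations of the multiset {1^{m_1}, 2^{m_2}, …, n^{m_n}}. In particular, if m_i ≠ 0 for exactly one index i, then [u,w] contains a unique maximal chain. -/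
/-!
Sagan–Vatter, Same Length Lemma for the composition poset ℙ*.
-/

/-- The underlying word of a composition, as a list of natural numbers. -/
def coes (w : List ℕ+) : List ℕ := w.map (fun x => (x : ℕ))

/-- The order on the composition poset ℙ*: `u ≤ w` iff `w` has a subsequence of
length `|u|` dominating `u` entrywise. -/
def CompLE (u w : List ℕ+) : Prop := List.SublistForall₂ (· ≤ ·) u w

/-- `w` covers `u` in ℙ*: `u < w` and there is no `v` with `u < v < w`. -/
def CompCovBy (w u : List ℕ+) : Prop :=
  CompLE u w ∧ u ≠ w ∧ ∀ v : List ℕ+, CompLE u v → CompLE v w → v = u ∨ v = w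

/-- A maximal chain of the interval `[u,w]` in ℙ*: a saturated chain
`w = v₀ ⋗ v₁ ⋗ … ⋗ v_d = u`, recorded as the list `[v₀, …, v_d]`. -/
def MaxChain (u w : List ℕ+) (vs : List (List ℕ+)) : Prop :=
  vs.head? = some w ∧ vs.getLast? = some u ∧ List.Chain' CompCovBy vs

/-- `b` is obtained from `a` by decreasing position `i` by `1` (both of the
same length). -/
def DecAt (a b : List ℕ+) (i : ℕ) : Prop :=
  b.length = a.length ∧ i < a.length ∧
  (∀ j, j ≠ i → b[j]? = a[j]?) ∧
  ∃ x y : ℕ+, a[i]? = some x ∧ b[i]? = some y ∧ (y : ℕ) + 1 = (x : ℕ)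

/-- `l` is the label sequence of the (same-length) maximal chain `vs`: the
`j`-th label is the position decreased in the `j`-th covering step. -/
def SLLabel (vs : List (List ℕ+)) (l : List ℕ) : Prop :=
  l.length + 1 = vs.length ∧
  ∀ (j : ℕ) (a b : List ℕ+) (i : ℕ),
    vs[j]? = some a → vs[j + 1]? = some b → l[j]? = some i → DecAt a b i




namespace SameLengthAux
open List

/-- pointwise domination -/
def PW (a b : List ℕ+) : Prop :=
  a.length = b.length ∧ ∀ (j : ℕ) (h1 : j < a.length) (h2 : j < b.length), a[j] ≤ b[j]

lemma compLE_refl (a : List ℕ+) : CompLE a a := refl_of (List.SublistForall₂ (· ≤ ·)) a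

lemma compLE_trans {a b c : List ℕ+} (h1 : CompLE a b) (h2 : CompLE b c) : CompLE a c :=
  trans_of (List.SublistForall₂ (· ≤ ·)) h1 h2

lemma compLE_length {a b : List ℕ+} (h : CompLE a b) : a.length ≤ b.length := by
  obtain ⟨l, hf, hs⟩ := List.sublistForall₂_iff.1 h
  calc a.length = l.length := hf.length_eq
    _ ≤ b.length := hs.length_le

lemma pw_of_compLE {a b : List ℕ+} (h : CompLE a b) (hl : a.length = b.length) : PW a b := by
  obtain ⟨l, hf, hs⟩ := List.sublistForall₂_iff.1 h
  have : l = b := hs.eq_of_length (by rw [← hf.length_eq, hl])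
  subst this
  obtain ⟨h1, h2⟩ := List.forall₂_iff_get.1 hf
  exact ⟨hl, fun j hj1 hj2 => h2 j hj1 hj2⟩

lemma compLE_of_pw {a b : List ℕ+} (h : PW a b) : CompLE a b :=
  List.sublistForall₂_iff.2 ⟨b, List.forall₂_iff_get.2 ⟨h.1, fun i h1 h2 => h.2 i h1 h2⟩,
    Sublist.refl b⟩

lemma pw_getElem? {a b : List ℕ+} (h : PW a b) {j : ℕ} {x y : ℕ+}
    (hx : a[j]? = some x) (hy : b[j]? = some y) : x ≤ y := by
  have hj : j < a.length := by
    by_contra hj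
    rw [getElem?_eq_none (by omega)] at hx
    cases hx
  have hj' : j < b.length := h.1 ▸ hj
  rw [getElem?_eq_getElem hj] at hx
  rw [getElem?_eq_getElem hj'] at hy
  cases hx; cases hy
  exact h.2 j hj hj'









lemma eq_of_getElem?_eq {a b : List ℕ+} {j : ℕ} (hj : j < a.length) (hj' : j < b.length)
    (h : a[j]? = b[j]?) : a[j] = b[j] := by
  rw [getElem?_eq_getElem hj, getElem?_eq_getElem hj'] at h
  exact Option.some.inj h

lemma decAt_unique {a b b' : List ℕ+} {i : ℕ} (h : DecAt a b i) (h' : DecAt a b' i) :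
    b = b' := by
  obtain ⟨hl, hi, hne, x, y, hx, hy, hxy⟩ := h
  obtain ⟨hl', hi', hne', x', y', hx', hy', hxy'⟩ := h'
  apply List.ext_getElem?
  intro j
  rcases eq_or_ne j i with rfl | hji
  · rw [hy, hy']
    congr 1
    apply PNat.coe_injective
    rw [hx] at hx'
    cases hx'
    omega
  · rw [hne j hji, hne' j hji]

lemma decAt_pw {a b : List ℕ+} {i : ℕ} (h : DecAt a b i) : PW b a := by
  obtain ⟨hl, hi, hne, x, y, hx, hy, hxy⟩ := h
  refine ⟨hl, fun j h1 h2 => ?_⟩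
  rcases eq_or_ne j i with rfl | hji
  · rw [getElem?_eq_getElem h1] at hy
    rw [getElem?_eq_getElem h2] at hx
    cases hy; cases hx
    exact (PNat.coe_le_coe _ _).1 (by omega)
  · exact le_of_eq (eq_of_getElem?_eq h1 h2 (hne j hji))

lemma decAt_ne {a b : List ℕ+} {i : ℕ} (h : DecAt a b i) : b ≠ a := by
  obtain ⟨hl, hi, hne, x, y, hx, hy, hxy⟩ := h
  intro hba
  rw [hba, hx] at hy
  cases hy
  omega

lemma covOfDec {a b : List ℕ+} {i : ℕ} (h : DecAt a b i) : CompCovBy a b := by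
  obtain ⟨hl, hi, hne, x, y, hx, hy, hxy⟩ := h
  refine ⟨compLE_of_pw (decAt_pw ⟨hl, hi, hne, x, y, hx, hy, hxy⟩),
    decAt_ne ⟨hl, hi, hne, x, y, hx, hy, hxy⟩, fun v hbv hva => ?_⟩
  have hvl : v.length = a.length := le_antisymm (compLE_length hva) (hl ▸ compLE_length hbv)
  have pwbv := pw_of_compLE hbv (by omega)
  have pwva := pw_of_compLE hva hvl
  have hiv : i < v.length := by omega
  have hz : v[i]? = some (v[i]'hiv) := getElem?_eq_getElem hiv
  have h1 : y ≤ v[i]'hiv := pw_getElem? pwbv hy hz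
  have h2 : (v[i]'hiv) ≤ x := pw_getElem? pwva hz hx
  have hcases : ((v[i]'hiv : ℕ) = (y : ℕ)) ∨ ((v[i]'hiv : ℕ) = (x : ℕ)) := by
    have := (PNat.coe_le_coe _ _).2 h1
    have := (PNat.coe_le_coe _ _).2 h2
    omega
  have key : ∀ j, j ≠ i → v[j]? = a[j]? := by
    intro j hji
    rcases Nat.lt_or_ge j a.length with hja | hja
    · have hjv : j < v.length := by omega
      have hjb : j < b.length := by omega
      have e1 : b[j]'hjb ≤ v[j]'hjv := pwbv.2 j hjb hjv
      have e2 : v[j]'hjv ≤ a[j]'hja := pwva.2 j hjv hja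
      have e3 : b[j]'hjb = a[j]'hja := eq_of_getElem?_eq hjb hja (hne j hji)
      rw [getElem?_eq_getElem hjv, getElem?_eq_getElem hja]
      exact congrArg some (le_antisymm e2 (e3 ▸ e1))
    · rw [getElem?_eq_none (by omega), getElem?_eq_none (by omega)]
  rcases hcases with hc | hc
  · left
    apply List.ext_getElem?
    intro j
    rcases eq_or_ne j i with rfl | hji
    · rw [hz, hy]
      exact congrArg some (PNat.coe_injective hc)
    · rw [key j hji, hne j hji]
  · right
    apply List.ext_getElem?
    intro j
    rcases eq_or_ne j i with rfl | hji
    · rw [hz, hx]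
      exact congrArg some (PNat.coe_injective hc)
    · exact key j hji

lemma decOfCov {a b : List ℕ+} (h : CompCovBy a b) (hl : b.length = a.length) :
    ∃ i, DecAt a b i := by
  obtain ⟨hba, hne, hmin⟩ := h
  have pw := pw_of_compLE hba hl
  -- find an index where they differ
  have hex : ∃ i, i < b.length ∧ b[i]? ≠ a[i]? := by
    by_contra hc
    push_neg at hc
    apply hne
    apply List.ext_getElem?
    intro j
    rcases Nat.lt_or_ge j b.length with hj | hj
    · exact hc j hj
    · rw [getElem?_eq_none hj, getElem?_eq_none (by omega)]
  obtain ⟨i, hi, hdi⟩ := hex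
  have hia : i < a.length := by omega
  set v : List ℕ+ := b.set i (b[i]'hi + 1) with hv
  have hvl : v.length = b.length := by simp [hv]
  have hbi_lt : b[i]'hi < a[i]'hia := by
    rcases lt_or_eq_of_le (pw.2 i hi hia) with hlt | heq
    · exact hlt
    · exact absurd (by rw [getElem?_eq_getElem hi, getElem?_eq_getElem hia, heq]) hdi
  have hvset_i : v[i]? = some (b[i]'hi + 1) := by
    rw [hv]; exact getElem?_set_self (by omega)
  have hvset : ∀ j, j ≠ i → v[j]? = b[j]? := by
    intro j hji
    rw [hv]; exact getElem?_set_ne (fun hh => hji hh.symm)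
  have hbv : CompLE b v := by
    apply compLE_of_pw
    refine ⟨hvl.symm, fun j h1 h2 => ?_⟩
    rcases eq_or_ne j i with rfl | hji
    · have : v[j]'h2 = b[j]'h1 + 1 := by
        have := hvset_i
        rw [getElem?_eq_getElem h2] at this
        exact Option.some.inj this
      rw [this]
      exact le_of_lt (PNat.lt_add_right _ _)
    · exact le_of_eq (eq_of_getElem?_eq h1 h2 (hvset j hji).symm)
  have hva : CompLE v a := by
    apply compLE_of_pw
    refine ⟨by omega, fun j h1 h2 => ?_⟩
    rcases eq_or_ne j i with rfl | hji
    · have : v[j]'h1 = b[j]'hi + 1 := by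
        have := hvset_i
        rw [getElem?_eq_getElem h1] at this
        exact Option.some.inj this
      rw [this]
      exact (PNat.coe_le_coe _ _).1 (by
        have := (PNat.coe_lt_coe _ _).2 hbi_lt
        simp only [PNat.add_coe, PNat.one_coe]
        omega)
    · have hjb : j < b.length := by omega
      have := eq_of_getElem?_eq h1 hjb (hvset j hji)
      rw [this]
      exact pw.2 j hjb h2
  rcases hmin v hbv hva with hvb | hva'
  · exfalso
    have : v[i]? = b[i]? := by rw [hvb]
    rw [hvset_i, getElem?_eq_getElem hi] at this
    have := Option.some.inj this
    have := congrArg (fun t : ℕ+ => (t : ℕ)) this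
    simp [PNat.add_coe] at this
  · refine ⟨i, by omega, hia, ?_, a[i]'hia, b[i]'hi,
      getElem?_eq_getElem hia, getElem?_eq_getElem hi, ?_⟩
    · intro j hji
      rw [← hva', hvset j hji]
    · have : a[i]? = some (b[i]'hi + 1) := by rw [← hva', hvset_i]
      rw [getElem?_eq_getElem hia] at this
      have := Option.some.inj this
      rw [this]
      simp [PNat.add_coe]




open List

lemma coes_cons (a : ℕ+) (v : List ℕ+) : coes (a :: v) = (a : ℕ) :: coes v := rfl

lemma coes_eq (v : List ℕ+) : coes v = v.map (fun x : ℕ+ => (x : ℕ)) := by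
  induction v with
  | nil => rfl
  | cons a v ih => rw [coes_cons, ih, List.map_cons]

lemma coes_length (v : List ℕ+) : (coes v).length = v.length := by
  rw [coes_eq, List.length_map]

lemma coes_getD_lt {v : List ℕ+} {j : ℕ} (h : j < v.length) :
    (coes v).getD j 0 = (v[j]'h : ℕ) := by
  rw [List.getD_eq_getElem _ _ (by rw [coes_length]; exact h)]
  simp only [coes_eq]
  exact List.getElem_map _

lemma coes_getD_ge {v : List ℕ+} {j : ℕ} (h : v.length ≤ j) :
    (coes v).getD j 0 = 0 := by
  rw [List.getD_eq_default _ _ (by rw [coes_length]; exact h)]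

lemma coes_getD (v : List ℕ+) (j : ℕ) :
    (coes v).getD j 0 = ((v[j]?).map (fun x : ℕ+ => (x : ℕ))).getD 0 := by
  rcases Nat.lt_or_ge j v.length with h | h
  · rw [coes_getD_lt h, getElem?_eq_getElem h]
    rfl
  · rw [coes_getD_ge h, getElem?_eq_none h]
    rfl

lemma decAt_getD {a b : List ℕ+} {i : ℕ} (h : DecAt a b i) (j : ℕ) :
    (coes a).getD j 0 = (coes b).getD j 0 + (if j = i then 1 else 0) := by
  obtain ⟨hl, hi, hne, x, y, hx, hy, hxy⟩ := h
  rcases eq_or_ne j i with rfl | hji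
  · simp only [if_pos rfl]
    rw [coes_getD, coes_getD, hx, hy]
    simpa using hxy.symm
  · rw [if_neg hji, coes_getD, coes_getD, hne j hji, Nat.add_zero]

lemma sllabel_singleton (a : List ℕ+) : SLLabel [a] [] := by
  constructor
  · rfl
  · intro j x y i _ _ hl
    simp at hl

lemma sllabel_cons {a b : List ℕ+} {vs : List (List ℕ+)} {i : ℕ} {l : List ℕ} :
    SLLabel (a :: b :: vs) (i :: l) ↔ DecAt a b i ∧ SLLabel (b :: vs) l := by
  constructor
  · rintro ⟨h1, h2⟩
    refine ⟨h2 0 a b i (by simp) (by simp) (by simp), ?_, ?_⟩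
    · simpa using h1
    · intro j x y i' hj1 hj2 hl
      exact h2 (j + 1) x y i' (by simpa using hj1) (by simpa using hj2) (by simpa using hl)
  · rintro ⟨hd, h1, h2⟩
    refine ⟨by simpa using h1, ?_⟩
    intro j x y i' hj1 hj2 hl
    match j with
    | 0 =>
      simp only [List.getElem?_cons_zero, Option.some.injEq] at hj1 hl
      simp only [List.getElem?_cons_succ, List.getElem?_cons_zero, Option.some.injEq] at hj2
      subst hj1; subst hj2; subst hl
      exact hd
    | j + 1 =>
      exact h2 j x y i' (by simpa using hj1) (by simpa using hj2) (by simpa using hl)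

lemma chain_le_head : ∀ (vs : List (List ℕ+)) (a : List ℕ+),
    Chain' CompCovBy (a :: vs) → ∀ x ∈ a :: vs, CompLE x a := by
  intro vs
  induction vs with
  | nil =>
    intro a _ x hx
    simp at hx
    subst hx
    exact compLE_refl _
  | cons b vs ih =>
    intro a hc x hx
    simp only [List.Chain', List.isChain_cons_cons] at hc
    rcases List.mem_cons.1 hx with rfl | hx
    · exact compLE_refl x
    · exact compLE_trans (ih b hc.2 x hx) hc.1.1

lemma chain_ge_last : ∀ (vs : List (List ℕ+)) (a u : List ℕ+),
    Chain' CompCovBy (a :: vs) → (a :: vs).getLast? = some u → ∀ x ∈ a :: vs, CompLE u x := by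
  intro vs
  induction vs with
  | nil =>
    intro a u _ hl x hx
    have h1 : a = u := by simpa using hl
    have h2 : x = a := by simpa using hx
    subst h1; subst h2
    exact compLE_refl _
  | cons b vs ih =>
    intro a u hc hl x hx
    simp only [List.Chain', List.isChain_cons_cons] at hc
    rw [List.getLast?_cons_cons] at hl
    rcases List.mem_cons.1 hx with rfl | hx
    · exact compLE_trans (ih b u hc.2 hl b List.mem_cons_self) hc.1.1
    · exact ih b u hc.2 hl x hx

lemma label_exists : ∀ (vs : List (List ℕ+)) (a : List ℕ+),
    Chain' CompCovBy (a :: vs) → (∀ x ∈ a :: vs, x.length = a.length) →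
    ∃ l : List ℕ, SLLabel (a :: vs) l ∧
      ∀ i : ℕ, ∀ last : List ℕ+, (a :: vs).getLast? = some last →
        l.count i + (coes last).getD i 0 = (coes a).getD i 0 := by
  intro vs
  induction vs with
  | nil =>
    intro a _ _
    refine ⟨[], sllabel_singleton a, ?_⟩
    intro i last hlast
    simp at hlast
    subst hlast
    simp
  | cons b vs ih =>
    intro a hc hlen
    simp only [List.Chain', List.isChain_cons_cons] at hc
    have hbl : b.length = a.length := hlen b (by simp)
    obtain ⟨i₀, hdec⟩ := decOfCov hc.1 hbl
    have hlen' : ∀ x ∈ b :: vs, x.length = b.length := by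
      intro x hx
      rw [hlen x (List.mem_cons_of_mem a hx), hbl]
    obtain ⟨l, hsl, hcount⟩ := ih b hc.2 hlen'
    refine ⟨i₀ :: l, sllabel_cons.2 ⟨hdec, hsl⟩, ?_⟩
    intro i last hlast
    rw [List.getLast?_cons_cons] at hlast
    have := hcount i last hlast
    have hgd := decAt_getD hdec i
    rcases eq_or_ne i i₀ with rfl | hne
    · rw [if_pos rfl] at hgd
      rw [List.count_cons_self]
      omega
    · rw [if_neg hne] at hgd
      rw [List.count_cons_of_ne hne.symm]
      omega

end SameLengthAux

namespace SameLengthAux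
open List

/-- decrement position `i` by one (PNat truncated). -/
def dec (a : List ℕ+) (i : ℕ) : List ℕ+ :=
  if h : i < a.length then a.set i (a[i]'h - 1) else a

/-- build the chain from `a` following label list `l`. -/
def build : List ℕ+ → List ℕ → List (List ℕ+)
  | a, [] => [a]
  | a, i :: l => a :: build (dec a i) l

lemma build_spec (u : List ℕ+) : ∀ (l : List ℕ) (a : List ℕ+), a.length = u.length →
    (∀ x ∈ l, x < u.length) →
    (∀ (j : ℕ) (hj : j < u.length) (hj' : j < a.length),
      (a[j]'hj' : ℕ) = (u[j]'hj : ℕ) + l.count j) →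
    Chain' CompCovBy (build a l) ∧ (build a l).head? = some a ∧
      (build a l).getLast? = some u ∧ SLLabel (build a l) l := by
  intro l
  induction l with
  | nil =>
    intro a hal _ hinv
    have : a = u := by
      apply List.ext_getElem hal
      intro j hj hj'
      apply PNat.coe_injective
      rw [hinv j hj' hj]
      simp
    subst this
    exact ⟨List.isChain_singleton a, rfl, rfl, sllabel_singleton a⟩
  | cons i l ih =>
    intro a hal hmem hinv
    have hi : i < u.length := hmem i (by simp)
    have hia : i < a.length := by omega
    have hai : (a[i]'hia : ℕ) = (u[i]'hi : ℕ) + (i :: l).count i := hinv i hi hia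
    have hcnt : (i :: l).count i = l.count i + 1 := List.count_cons_self
    have hai2 : 2 ≤ (a[i]'hia : ℕ) := by
      have := (u[i]'hi).pos
      omega
    set b := dec a i with hb
    have hbdef : b = a.set i (a[i]'hia - 1) := by rw [hb, dec, dif_pos hia]
    have hbl : b.length = a.length := by rw [hbdef, List.length_set]
    have h1lt : (1 : ℕ+) < a[i]'hia := (PNat.coe_lt_coe _ _).1 (by rw [PNat.one_coe]; omega)
    have hsub : ((a[i]'hia - 1 : ℕ+) : ℕ) = (a[i]'hia : ℕ) - 1 := by
      rw [PNat.sub_coe, if_pos h1lt, PNat.one_coe]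
    have hbi : b[i]? = some (a[i]'hia - 1) := by
      rw [hbdef]
      exact getElem?_set_self (by omega)
    have hbj : ∀ j, j ≠ i → b[j]? = a[j]? := by
      intro j hji
      rw [hbdef]
      exact getElem?_set_ne (fun hh => hji hh.symm)
    have hdec : DecAt a b i := by
      refine ⟨hbl, hia, hbj, a[i]'hia, a[i]'hia - 1, getElem?_eq_getElem hia, hbi, ?_⟩
      omega
    have hinv' : ∀ (j : ℕ) (hj : j < u.length) (hj' : j < b.length),
        (b[j]'hj' : ℕ) = (u[j]'hj : ℕ) + l.count j := by
      intro j hj hj'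
      have hja : j < a.length := by omega
      rcases eq_or_ne j i with rfl | hji
      · have : b[j]'hj' = a[j]'hja - 1 := by
          have := hbi
          rw [getElem?_eq_getElem hj'] at this
          exact Option.some.inj this
        rw [this, hsub]
        omega
      · have : b[j]'hj' = a[j]'hja := eq_of_getElem?_eq hj' hja (hbj j hji)
        rw [this, hinv j hj hja, List.count_cons_of_ne hji.symm]
    obtain ⟨hch, hhd, hlast, hsl⟩ := ih b (hbl.trans hal) (fun x hx => hmem x (by simp [hx])) hinv'
    have hbuild : build a (i :: l) = a :: build b l := rfl
    obtain ⟨t, ht⟩ : ∃ t, build b l = b :: t := by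
      cases hbl : build b l with
      | nil => rw [hbl] at hhd; simp at hhd
      | cons x t =>
        rw [hbl] at hhd
        simp at hhd
        exact ⟨t, by rw [hhd]⟩
    refine ⟨?_, ?_, ?_, ?_⟩
    · rw [hbuild, ht]; simp only [List.Chain', List.isChain_cons_cons]
      exact ⟨covOfDec hdec, ht ▸ hch⟩
    · rw [hbuild]; rfl
    · rw [hbuild, ht, List.getLast?_cons_cons, ← ht, hlast]
    · rw [hbuild, ht]
      exact sllabel_cons.2 ⟨hdec, ht ▸ hsl⟩

lemma label_uniq : ∀ (l : List ℕ) (vs₁ vs₂ : List (List ℕ+)) (a : List ℕ+),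
    vs₁.head? = some a → vs₂.head? = some a → SLLabel vs₁ l → SLLabel vs₂ l → vs₁ = vs₂ := by
  intro l
  induction l with
  | nil =>
    intro vs₁ vs₂ a h1 h2 hs1 hs2
    obtain ⟨x, hx⟩ := List.length_eq_one_iff.1 (show vs₁.length = 1 by have := hs1.1; simp only [List.length_nil] at this; omega)
    obtain ⟨y, hy⟩ := List.length_eq_one_iff.1 (show vs₂.length = 1 by have := hs2.1; simp only [List.length_nil] at this; omega)
    subst hx; subst hy
    simp only [List.head?_cons, Option.some.injEq] at h1 h2
    rw [h1, h2]
  | cons i l ih =>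
    intro vs₁ vs₂ a h1 h2 hs1 hs2
    obtain ⟨b₁, t₁, ht₁⟩ : ∃ b t, vs₁ = a :: b :: t := by
      match vs₁, hs1.1, h1 with
      | x :: y :: t, _, h1 =>
        simp only [List.head?_cons, Option.some.injEq] at h1
        exact ⟨y, t, by rw [h1]⟩
    obtain ⟨b₂, t₂, ht₂⟩ : ∃ b t, vs₂ = a :: b :: t := by
      match vs₂, hs2.1, h2 with
      | x :: y :: t, _, h2 =>
        simp only [List.head?_cons, Option.some.injEq] at h2
        exact ⟨y, t, by rw [h2]⟩
    subst ht₁; subst ht₂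
    obtain ⟨hd₁, hsl₁⟩ := sllabel_cons.1 hs1
    obtain ⟨hd₂, hsl₂⟩ := sllabel_cons.1 hs2
    have hbb : b₁ = b₂ := decAt_unique hd₁ hd₂
    subst hbb
    have := ih (b₁ :: t₁) (b₁ :: t₂) b₁ rfl rfl hsl₁ hsl₂
    rw [this]

end SameLengthAux

namespace SameLengthAux
open List

def fromFn (u : List ℕ+) (f : Fin u.length → ℕ) : List ℕ+ :=
  List.ofFn fun i => ⟨(u.get i : ℕ) + f i, Nat.lt_of_lt_of_le (u.get i).pos (Nat.le_add_right _ _)⟩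

lemma fromFn_length (u : List ℕ+) (f : Fin u.length → ℕ) : (fromFn u f).length = u.length :=
  List.length_ofFn

lemma fromFn_coe (u : List ℕ+) (f : Fin u.length → ℕ) (j : ℕ) (hj : j < u.length)
    (hj' : j < (fromFn u f).length) :
    ((fromFn u f)[j]'hj' : ℕ) = (u[j]'hj : ℕ) + f ⟨j, hj⟩ := by
  unfold fromFn
  exact congrArg (fun x : ℕ+ => (x : ℕ)) (List.getElem_ofFn _)

lemma fromFn_getD (u : List ℕ+) (f : Fin u.length → ℕ) (j : ℕ) (hj : j < u.length) :
    (coes (fromFn u f)).getD j 0 = (u[j]'hj : ℕ) + f ⟨j, hj⟩ := by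
  rw [coes_getD_lt (by rw [fromFn_length]; exact hj), fromFn_coe u f j hj]

lemma pw_getD {a b : List ℕ+} (h : PW a b) (j : ℕ) :
    (coes a).getD j 0 ≤ (coes b).getD j 0 := by
  rcases Nat.lt_or_ge j a.length with hj | hj
  · rw [coes_getD_lt hj, coes_getD_lt (h.1 ▸ hj)]
    exact (PNat.coe_le_coe _ _).2 (h.2 j hj (h.1 ▸ hj))
  · rw [coes_getD_ge hj]
    omega

end SameLengthAux


open SameLengthAux List

/-- Same Length Lemma.  Let `u ≤ w` in ℙ* with `|u| = |w| = n`, and set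
`mᵢ = w(i) - u(i)`.  Then: (1) every `v ∈ [u,w]` has length `n` and satisfies
`u(i) ≤ v(i) ≤ w(i)` for all `i`; (2) the interval `[u,w]` is
order-isomorphic to the product of chains `∏ᵢ {0, 1, …, mᵢ}`; (3) & (4) the
label map is a bijection between the maximal chains of `[u,w]` and the
permutations of the multiset `{1^{m₁}, …, n^{m_n}}` (lists of positions `l`
with `count i l = mᵢ` for every `i`); (5) in particular, if `mᵢ ≠ 0` for
exactly one index `i`, then `[u,w]` has a unique maximal chain. -/
theorem same_length_lemma (u w : List ℕ+) (h : CompLE u w)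
    (hlen : u.length = w.length) :
    (∀ v : List ℕ+, CompLE u v → CompLE v w →
      v.length = u.length ∧
      ∀ i, i < u.length → ∃ a b c : ℕ+,
        u[i]? = some a ∧ v[i]? = some b ∧ w[i]? = some c ∧ a ≤ b ∧ b ≤ c) ∧
    (∃ e : {v : List ℕ+ // CompLE u v ∧ CompLE v w} ≃
        ((i : Fin u.length) → Fin ((coes w).getD i 0 - (coes u).getD i 0 + 1)),
      ∀ a b : {v : List ℕ+ // CompLE u v ∧ CompLE v w},
        CompLE a.1 b.1 ↔ e a ≤ e b) ∧
    (∀ vs : List (List ℕ+), MaxChain u w vs →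
      ∃ l : List ℕ, SLLabel vs l ∧
        ∀ i, l.count i = (coes w).getD i 0 - (coes u).getD i 0) ∧
    (∀ l : List ℕ, (∀ i, l.count i = (coes w).getD i 0 - (coes u).getD i 0) →
      ∃! vs : List (List ℕ+), MaxChain u w vs ∧ SLLabel vs l) ∧
    ((∃! i : ℕ, i < u.length ∧ (coes w).getD i 0 ≠ (coes u).getD i 0) →
      ∃! vs : List (List ℕ+), MaxChain u w vs) := by
  have pwuw : PW u w := pw_of_compLE h hlen
  have part1 : ∀ v : List ℕ+, CompLE u v → CompLE v w →
      v.length = u.length ∧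
      ∀ i, i < u.length → ∃ a b c : ℕ+,
        u[i]? = some a ∧ v[i]? = some b ∧ w[i]? = some c ∧ a ≤ b ∧ b ≤ c := by
    intro v huv hvw
    have h1 := compLE_length huv
    have h2 := compLE_length hvw
    have hlv : v.length = u.length := by omega
    have pw1 := pw_of_compLE huv hlv.symm
    have pw2 := pw_of_compLE hvw (by omega)
    refine ⟨hlv, fun i hi => ?_⟩
    have hiv : i < v.length := by omega
    have hiw : i < w.length := by omega
    exact ⟨u[i]'hi, v[i]'hiv, w[i]'hiw, getElem?_eq_getElem hi, getElem?_eq_getElem hiv,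
      getElem?_eq_getElem hiw, pw1.2 i hi hiv, pw2.2 i hiv hiw⟩
  have hgetD : ∀ v : List ℕ+, CompLE u v → CompLE v w → ∀ j : ℕ,
      (coes u).getD j 0 ≤ (coes v).getD j 0 ∧ (coes v).getD j 0 ≤ (coes w).getD j 0 := by
    intro v huv hvw j
    have h1 := compLE_length huv
    have h2 := compLE_length hvw
    exact ⟨pw_getD (pw_of_compLE huv (by omega)) j, pw_getD (pw_of_compLE hvw (by omega)) j⟩
  have part3 : ∀ vs : List (List ℕ+), MaxChain u w vs →
      ∃ l : List ℕ, SLLabel vs l ∧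
        ∀ i, l.count i = (coes w).getD i 0 - (coes u).getD i 0 := by
    rintro vs ⟨hhd, hlast, hch⟩
    cases vs with
    | nil => simp at hhd
    | cons a t =>
      have ha : a = w := by simpa using hhd
      rw [ha] at hch hlast ⊢
      have hlens : ∀ x ∈ w :: t, x.length = w.length := by
        intro x hx
        have h1 := compLE_length (chain_le_head t w hch x hx)
        have h2 := compLE_length (chain_ge_last t w u hch hlast x hx)
        omega
      obtain ⟨l, hsl, hcount⟩ := label_exists t w hch hlens
      refine ⟨l, hsl, fun i => ?_⟩
      have h1 := hcount i u hlast
      have h2 := (hgetD u (compLE_refl u) h i).1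
      omega
  have part4 : ∀ l : List ℕ, (∀ i, l.count i = (coes w).getD i 0 - (coes u).getD i 0) →
      ∃! vs : List (List ℕ+), MaxChain u w vs ∧ SLLabel vs l := by
    intro l hcnt
    have hmem : ∀ x ∈ l, x < u.length := by
      intro x hx
      by_contra hc
      push_neg at hc
      have h0 : l.count x = 0 := by
        rw [hcnt x, coes_getD_ge (show w.length ≤ x by omega), coes_getD_ge hc]
      have := List.count_pos_iff.2 hx
      omega
    have hinv : ∀ (j : ℕ) (hj : j < u.length) (hj' : j < w.length),
        (w[j]'hj' : ℕ) = (u[j]'hj : ℕ) + l.count j := by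
      intro j hj hj'
      have h1 := hcnt j
      rw [coes_getD_lt hj', coes_getD_lt hj] at h1
      have hle := (PNat.coe_le_coe _ _).2 (pwuw.2 j hj hj')
      omega
    obtain ⟨hch, hhd, hlast, hsl⟩ := build_spec u l w hlen.symm hmem hinv
    refine ⟨build w l, ⟨⟨hhd, hlast, hch⟩, hsl⟩, ?_⟩
    rintro vs ⟨⟨hhd', hlast', hch'⟩, hsl'⟩
    exact label_uniq l vs (build w l) w hhd' hhd hsl' hsl
  refine ⟨part1, ?_, part3, part4, ?_⟩
  · -- part 2: the order isomorphism
    refine ⟨{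
      toFun := fun v => fun i => ⟨(coes v.1).getD i.1 0 - (coes u).getD i.1 0, by
        have := hgetD v.1 v.2.1 v.2.2 i.1
        omega⟩
      invFun := fun f => ⟨fromFn u (fun i => (f i : ℕ)), by
        apply compLE_of_pw
        refine ⟨(fromFn_length u _).symm, fun j h1 h2 => ?_⟩
        apply (PNat.coe_le_coe _ _).1
        rw [fromFn_coe u _ j h1 h2]
        omega, by
        apply compLE_of_pw
        refine ⟨by rw [fromFn_length]; exact hlen, fun j h1 h2 => ?_⟩
        have hj : j < u.length := by
          have := fromFn_length u (fun i => ((f i : ℕ)))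
          omega
        apply (PNat.coe_le_coe _ _).1
        rw [fromFn_coe u _ j hj h1]
        have hb : (f ⟨j, hj⟩ : ℕ) < (coes w).getD j 0 - (coes u).getD j 0 + 1 :=
          (f ⟨j, hj⟩).isLt
        have e1 : (coes w).getD j 0 = ((w[j]'h2 : ℕ+) : ℕ) := coes_getD_lt h2
        have e2 : (coes u).getD j 0 = ((u[j]'hj : ℕ+) : ℕ) := coes_getD_lt hj
        have hle := (PNat.coe_le_coe _ _).2 (pwuw.2 j hj h2)
        omega⟩
      left_inv := fun v => Subtype.ext (by
        have hlv := (part1 v.1 v.2.1 v.2.2).1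
        show fromFn u (fun i => ((coes v.1).getD i.1 0 - (coes u).getD i.1 0)) = v.1
        apply List.ext_getElem (by rw [fromFn_length]; omega)
        intro j h1 h2
        apply PNat.coe_injective
        have hj : j < u.length := by
          have := fromFn_length u (fun i : Fin u.length =>
            ((coes v.1).getD i.1 0 - (coes u).getD i.1 0))
          omega
        rw [fromFn_coe u _ j hj h1]
        rw [Fin.val_mk]
        have hd := hgetD v.1 v.2.1 v.2.2 j
        have e1 : (coes v.1).getD j 0 = ((v.1[j]'h2 : ℕ+) : ℕ) := coes_getD_lt h2
        have e2 : (coes u).getD j 0 = ((u[j]'hj : ℕ+) : ℕ) := coes_getD_lt hj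
        omega)
      right_inv := fun f => funext fun i => Fin.ext (by
        show (coes (fromFn u (fun i => (f i : ℕ)))).getD i.1 0 - (coes u).getD i.1 0
            = (f i : ℕ)
        rw [fromFn_getD u _ i.1 i.isLt]
        have e2 : (coes u).getD i.1 0 = ((u[i.1]'i.isLt : ℕ+) : ℕ) := coes_getD_lt i.isLt
        rw [Fin.eta]
        omega) }, ?_⟩
    intro a b
    have la := (part1 a.1 a.2.1 a.2.2).1
    have lb := (part1 b.1 b.2.1 b.2.2).1
    constructor
    · intro hab
      have pw := pw_of_compLE hab (by omega)
      rw [Pi.le_def]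
      intro i
      rw [Fin.le_def]
      simp only [Equiv.coe_fn_mk]
      have h1 := pw_getD pw i.1
      have h2 := hgetD a.1 a.2.1 a.2.2 i.1
      omega
    · intro hab
      apply compLE_of_pw
      refine ⟨by omega, fun j h1 h2 => ?_⟩
      have hj : j < u.length := by omega
      have hthis := Pi.le_def.1 hab ⟨j, hj⟩
      rw [Fin.le_def] at hthis
      simp only [Equiv.coe_fn_mk] at hthis
      have hda := (hgetD a.1 a.2.1 a.2.2 j).1
      have hdb := (hgetD b.1 b.2.1 b.2.2 j).1
      apply (PNat.coe_le_coe _ _).1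
      have e1 : (coes a.1).getD j 0 = ((a.1[j]'h1 : ℕ+) : ℕ) := coes_getD_lt h1
      have e2 : (coes b.1).getD j 0 = ((b.1[j]'h2 : ℕ+) : ℕ) := coes_getD_lt h2
      omega
  · -- part 5
    rintro ⟨i₀, ⟨hi₀, hne₀⟩, huniq⟩
    have hdiffzero : ∀ j, j ≠ i₀ → (coes w).getD j 0 - (coes u).getD j 0 = 0 := by
      intro j hj
      rcases Nat.lt_or_ge j u.length with hju | hju
      · by_contra hc
        have hne : (coes w).getD j 0 ≠ (coes u).getD j 0 := by omega
        exact hj (huniq j ⟨hju, hne⟩)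
      · rw [coes_getD_ge (by omega), coes_getD_ge hju]
    set m₀ := (coes w).getD i₀ 0 - (coes u).getD i₀ 0 with hm₀
    have hl₀ : ∀ i, (List.replicate m₀ i₀).count i
        = (coes w).getD i 0 - (coes u).getD i 0 := by
      intro i
      rcases eq_or_ne i i₀ with rfl | hi
      · rw [List.count_replicate, if_pos (by simp)]
      · rw [List.count_replicate, if_neg (by simpa using Ne.symm hi)]
        exact (hdiffzero i hi).symm
    obtain ⟨vs₀, hvs₀, huniq₀⟩ := part4 (List.replicate m₀ i₀) hl₀
    refine ⟨vs₀, hvs₀.1, ?_⟩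
    intro vs hvs
    obtain ⟨l', hsl', hcnt'⟩ := part3 vs hvs
    have hall : ∀ x ∈ l', x = i₀ := by
      intro x hx
      have hpos := List.count_pos_iff.2 hx
      by_contra hxx
      have hc := hcnt' x
      rw [hdiffzero x hxx] at hc
      omega
    have hrep := List.eq_replicate_of_mem hall
    have hlen' : l'.length = m₀ := by
      have h2 : l'.count i₀ = l'.length := by
        rw [hrep, List.count_replicate, if_pos (by simp), List.length_replicate]
      have h3 := hcnt' i₀
      omega
    have hl' : l' = List.replicate m₀ i₀ := by rw [hrep, hlen']
    exact huniq₀ vs ⟨hvs, hl' ▸ hsl'⟩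
end

section
/- If w covers u in the composition poset ℙ*, then there is exactly one normal embedding of u into w; moreover, if this embedding turns an entry 1 of w into 0, that entry is the first element of its run of 1's in w. -/
/-- `η` is an embedding of the composition `u` into the word `W` over ℕ:
it has length `|W|`, its nonzero entries read left to right form `u`, and
`η(i) ≤ W(i)` for all `i`. -/
def IsEmb (u : List ℕ+) (W η : List ℕ) : Prop :=
  η.length = W.length ∧
  η.filter (fun x => decide (x ≠ 0)) = coes u ∧
  ∀ i, η.getD i 0 ≤ W.getD i 0

/-- `[r,t]` is a run of `k`'s in the word `W`: a maximal interval of indices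
on which `W` is constantly `k`. -/
def IsRun (W : List ℕ) (k r t : ℕ) : Prop :=
  r ≤ t ∧ t < W.length ∧ (∀ i, r ≤ i → i ≤ t → W.getD i 0 = k) ∧
  (r = 0 ∨ W.getD (r - 1) 0 ≠ k) ∧ (t + 1 = W.length ∨ W.getD (t + 1) 0 ≠ k)

/-- A normal embedding of `u` into the word `W`: an embedding such that
(1) each `η(i)` is `W(i)`, `W(i) - 1`, or `0`, and (2) for every run `[r,t]`
of `k`'s in `W`, `(r,t] ⊆ Supp η` if `k = 1`, and `r ∈ Supp η` if `k ≥ 2`. -/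
def NormalEmb (u : List ℕ+) (W η : List ℕ) : Prop :=
  IsEmb u W η ∧
  (∀ i, i < W.length →
    η.getD i 0 = W.getD i 0 ∨ η.getD i 0 = W.getD i 0 - 1 ∨ η.getD i 0 = 0) ∧
  ∀ k r t, IsRun W k r t →
    (k = 1 → ∀ i, r < i → i ≤ t → η.getD i 0 ≠ 0) ∧
    (2 ≤ k → η.getD r 0 ≠ 0)

/-- The defect of an embedding `η` into `W`: the number of positions `i` with
`η(i) = W(i) - 1`. -/
def defect (W η : List ℕ) : ℕ :=
  (List.range W.length).countP (fun i => decide (η.getD i 0 = W.getD i 0 - 1))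

lemma coes_eq (w : List ℕ+) : coes w = List.map (fun x : ℕ+ => (x : ℕ)) w := by
  simp only [coes, List.map_id']
  induction w with
  | nil => rfl
  | cons a w ih => simpa [List.flatMap_cons] using ih

lemma coes_length (w : List ℕ+) : (coes w).length = w.length := by
  simp only [coes_eq, List.length_map]

lemma coes_getD (w : List ℕ+) {i : ℕ} (hi : i < w.length) :
    (coes w).getD i 0 = (w[i] : ℕ) := by
  rw [coes_eq, List.getD_eq_getElem _ _ (by rw [List.length_map]; exact hi)]
  exact List.getElem_map _

lemma coes_pos (w : List ℕ+) {i : ℕ} (hi : i < w.length) : 0 < (coes w).getD i 0 := by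
  rw [coes_getD w hi]; exact (w[i]).pos

lemma coes_ne_zero (w : List ℕ+) : ∀ x ∈ coes w, x ≠ 0 := by
  intro x hx
  rw [coes_eq] at hx
  obtain ⟨a, -, rfl⟩ := List.mem_map.mp hx
  exact a.ne_zero

lemma coes_eraseIdx (w : List ℕ+) (p : ℕ) : coes (w.eraseIdx p) = (coes w).eraseIdx p := by
  simp only [coes_eq, List.eraseIdx_eq_take_drop_succ, List.map_append, List.map_take,
    List.map_drop]

lemma sum_filter_ne_zero (l : List ℕ) : (l.filter (fun x => decide (x ≠ 0))).sum = l.sum := by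
  induction l with
  | nil => rfl
  | cons a l ih =>
    rw [List.filter_cons]
    by_cases ha : a = 0
    · subst ha
      simpa using ih
    · rw [if_pos (by simpa using ha), List.sum_cons, List.sum_cons, ih]

lemma sum_eraseIdx' (W : List ℕ) : ∀ p : ℕ, p < W.length →
    (W.eraseIdx p).sum + W.getD p 0 = W.sum := by
  induction W with
  | nil => intro p hp; simp at hp
  | cons a W ih =>
    intro p hp
    cases p with
    | zero => simp [List.eraseIdx]; omega
    | succ p =>
      have := ih p (by simpa using hp)
      simp only [List.eraseIdx, List.sum_cons, List.getD_cons_succ]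
      omega

lemma sum_add_zip (η W : List ℕ) (h : List.Forall₂ (· ≤ ·) η W) :
    W.sum = η.sum + (List.zipWith (· - ·) W η).sum := by
  induction h with
  | nil => rfl
  | @cons a b l₁ l₂ hab h ih =>
    simp only [List.zipWith, List.sum_cons, ih]
    omega

lemma getD_le_sum (l : List ℕ) : ∀ i : ℕ, l.getD i 0 ≤ l.sum := by
  induction l with
  | nil => intro i; simp
  | cons a l ih =>
    intro i
    cases i with
    | zero => simp
    | succ i => have := ih i; simp only [List.getD_cons_succ, List.sum_cons]; omega

lemma getD_add_getD_le_sum (l : List ℕ) : ∀ i j : ℕ, i ≠ j →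
    l.getD i 0 + l.getD j 0 ≤ l.sum := by
  induction l with
  | nil => intro i j _; simp
  | cons a l ih =>
    intro i j hij
    cases i with
    | zero =>
      cases j with
      | zero => omega
      | succ j =>
        have := getD_le_sum l j
        simp only [List.getD_cons_zero, List.getD_cons_succ, List.sum_cons]; omega
    | succ i =>
      cases j with
      | zero =>
        have := getD_le_sum l i
        simp only [List.getD_cons_zero, List.getD_cons_succ, List.sum_cons]; omega
      | succ j =>
        have := ih i j (by omega)
        simp only [List.getD_cons_succ, List.sum_cons]; omega

lemma filter_set_zero (W : List ℕ) (hW : ∀ x ∈ W, x ≠ 0) :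
    ∀ j : ℕ, j < W.length →
    (W.set j 0).filter (fun x => decide (x ≠ 0)) = W.eraseIdx j := by
  induction W with
  | nil => intro j hj; simp at hj
  | cons a W ih =>
    intro j hj
    cases j with
    | zero =>
      simp only [List.set, List.eraseIdx]
      rw [List.filter_cons, if_neg (by simp)]
      exact List.filter_eq_self.mpr
        (fun x hx => by simpa using hW x (List.mem_cons_of_mem a hx))
    | succ j =>
      have ha : a ≠ 0 := hW a List.mem_cons_self
      have := ih (fun x hx => hW x (List.mem_cons_of_mem a hx)) j (by simpa using hj)
      simp only [List.set, List.eraseIdx]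
      rw [List.filter_cons, if_pos (by simpa using ha), this]

lemma eraseIdx_eq_of_const (W : List ℕ) {r p : ℕ} (hrp : r ≤ p) (hp : p < W.length)
    (hconst : ∀ j, r ≤ j → j ≤ p → W.getD j 0 = 1) : W.eraseIdx r = W.eraseIdx p := by
  have hr : r < W.length := lt_of_le_of_lt (by omega) hp
  apply List.ext_getElem
  · simp [List.length_eraseIdx, hr, hp]
  · intro n h1 h2
    have hn : n < W.length - 1 := by simpa [List.length_eraseIdx, hr] using h1
    rw [List.getElem_eraseIdx, List.getElem_eraseIdx]
    rcases lt_or_ge n r with hnr | hnr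
    · rw [dif_pos hnr, dif_pos (by omega)]
    · rcases lt_or_ge n p with hnp | hnp
      · rw [dif_neg (by omega), dif_pos hnp]
        have e1 : W.getD (n+1) 0 = 1 := hconst (n+1) (by omega) (by omega)
        have e2 : W.getD n 0 = 1 := hconst n hnr (by omega)
        rw [List.getD_eq_getElem _ _ (by omega : n + 1 < W.length)] at e1
        rw [List.getD_eq_getElem _ _ (by omega : n < W.length)] at e2
        rw [e1, e2]
      · rw [dif_neg (by omega), dif_neg (by omega)]

lemma start_unique (W : List ℕ) : ∀ a b : ℕ, a < W.length → b < W.length →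
    W.getD a 0 = 1 → W.getD b 0 = 1 →
    (a = 0 ∨ W.getD (a-1) 0 ≠ 1) → (b = 0 ∨ W.getD (b-1) 0 ≠ 1) →
    W.eraseIdx a = W.eraseIdx b → a = b := by
  have key : ∀ a b : ℕ, a < b → b < W.length →
      (b = 0 ∨ W.getD (b-1) 0 ≠ 1) → W.getD b 0 = 1 → W.eraseIdx a = W.eraseIdx b →
      False := by
    intro a b hab hb hsb hWb her
    have hb1 : 1 ≤ b := by omega
    have hlen : b - 1 < (W.eraseIdx a).length := by
      simp only [List.length_eraseIdx]
      rw [if_pos (by omega)]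
      omega
    have hlen2 : b - 1 < (W.eraseIdx b).length := her ▸ hlen
    have e1 : (W.eraseIdx a)[b-1]'hlen = W[b]'hb := by
      rw [List.getElem_eraseIdx, dif_neg (by omega)]
      congr 1
      omega
    have e2 : (W.eraseIdx b)[b-1]'hlen2 = W[b-1]'(by omega) := by
      rw [List.getElem_eraseIdx, dif_pos (by omega)]
    have hh : (W.eraseIdx a).getD (b-1) 0 = (W.eraseIdx b).getD (b-1) 0 := by rw [her]
    rw [List.getD_eq_getElem _ _ hlen, List.getD_eq_getElem _ _ hlen2, e1, e2] at hh
    rw [List.getD_eq_getElem _ _ hb] at hWb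
    rcases hsb with h0 | hne
    · omega
    · rw [List.getD_eq_getElem _ _ (by omega : b - 1 < W.length)] at hne
      exact hne (hh ▸ hWb)
  intro a b ha hb hWa hWb hsa hsb her
  rcases lt_trichotomy a b with h | h | h
  · exact absurd (key a b h hb hsb hWb her) (fun x => x)
  · exact h
  · exact absurd (key b a h ha hsa hWa her.symm) (fun x => x)


lemma exists_run (W : List ℕ) (k j : ℕ) (hj : j < W.length) (hWj : W.getD j 0 = k) :
    ∃ r t, IsRun W k r t ∧ r ≤ j ∧ j ≤ t := by
  classical
  let P : ℕ → Prop := fun r => ∀ i, r ≤ i → i ≤ j → W.getD i 0 = k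
  have hPj : P j := by
    intro i h1 h2
    have : i = j := le_antisymm h2 h1
    rw [this]; exact hWj
  have hPex : ∃ r, P r := ⟨j, hPj⟩
  set r := Nat.find hPex with hrdef
  have hr : P r := Nat.find_spec hPex
  have hrj : r ≤ j := Nat.find_min' hPex hPj
  have hrstart : r = 0 ∨ W.getD (r-1) 0 ≠ k := by
    by_contra hc
    push_neg at hc
    obtain ⟨hr0, hWr⟩ := hc
    have hPr1 : P (r-1) := by
      intro i h1 h2
      rcases eq_or_lt_of_le h1 with heq | hlt
      · rw [← heq]; exact hWr
      · exact hr i (by omega) h2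
    have := Nat.find_min' hPex hPr1
    omega
  let Q : ℕ → Prop := fun m => j < m ∧ (m = W.length ∨ W.getD m 0 ≠ k)
  have hQex : ∃ m, Q m := ⟨W.length, hj, Or.inl rfl⟩
  set M := Nat.find hQex with hMdef
  have hM : Q M := Nat.find_spec hQex
  have hMj : j < M := hM.1
  have hMle : M ≤ W.length := Nat.find_min' hQex ⟨hj, Or.inl rfl⟩
  have hmid : ∀ m, j < m → m < M → W.getD m 0 = k := by
    intro m h1 h2
    have hnq := Nat.find_min hQex h2
    simp only [Q, not_and, not_or, ne_eq, not_not] at hnq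
    exact (hnq h1).2
  refine ⟨r, M - 1, ⟨by omega, by omega, ?_, hrstart, ?_⟩, hrj, by omega⟩
  · intro i h1 h2
    rcases le_or_gt i j with hij | hij
    · exact hr i h1 hij
    · exact hmid i hij (by omega)
  · have hM1 : M - 1 + 1 = M := by omega
    rw [hM1]
    exact hM.2

lemma normal_zero_start {u : List ℕ+} {W η : List ℕ} (hn : NormalEmb u W η)
    {i : ℕ} (hi : i < W.length) (hW1 : W.getD i 0 = 1) (hz : η.getD i 0 = 0) :
    i = 0 ∨ W.getD (i-1) 0 ≠ 1 := by
  obtain ⟨r, t, hrun, hri, hit⟩ := exists_run W 1 i hi hW1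
  have hcl := (hn.2.2 1 r t hrun).1 rfl
  have hir : i = r := by
    by_contra hne
    exact hcl i (lt_of_le_of_ne hri (Ne.symm hne)) hit hz
  rw [hir]
  exact hrun.2.2.2.1


open List in
lemma sublist_eraseIdx_of_lt {α : Type*} {l w : List α} (h : l <+ w) :
    l.length < w.length → ∃ p, p < w.length ∧ l <+ w.eraseIdx p := by
  induction h with
  | slnil => intro hl; simp at hl
  | @cons l w a h ih =>
    intro _
    exact ⟨0, by simp, by simpa [List.eraseIdx] using h⟩
  | @cons_cons l w a h ih =>
    intro hl
    obtain ⟨p, hp, hsub⟩ := ih (by simpa using hl)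
    exact ⟨p + 1, by simpa using hp, by simpa [List.eraseIdx] using hsub.cons₂ a⟩

open List in
lemma compLE_of_sublist {u w : List ℕ+} (h : u <+ w) : CompLE u w :=
  List.sublistForall₂_iff.mpr ⟨u, List.forall₂_same.mpr (fun x _ => le_refl x), h⟩

lemma compLE_of_forall₂ {u w : List ℕ+} (h : List.Forall₂ (· ≤ ·) u w) : CompLE u w :=
  List.sublistForall₂_iff.mpr ⟨w, h, List.Sublist.refl w⟩

lemma cover_struct {u w : List ℕ+} (h : CompCovBy w u) :
    (∃ i, ∃ hi : i < u.length, w = u.set i (u[i] + 1)) ∨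
    (∃ p, ∃ hp : p < w.length, w[p] = 1 ∧ u = w.eraseIdx p) := by
  obtain ⟨hle, hne, hcov⟩ := h
  obtain ⟨l, hfa, hsub⟩ := List.sublistForall₂_iff.mp hle
  by_cases hlen : l.length = w.length
  · -- same length : pointwise case
    have hl : l = w := hsub.eq_of_length hlen
    rw [hl] at hfa
    left
    have hul : u.length = w.length := hfa.length_eq
    have hptw : ∀ j (h1 : j < u.length), u[j] ≤ w[j]'(hul ▸ h1) := by
      intro j h1
      have := (List.forall₂_iff_get.mp hfa).2 j h1 (hul ▸ h1)
      simpa using this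
    have hex : ∃ i, i < u.length ∧ u.getD i 1 ≠ w.getD i 1 := by
      by_contra hno
      push_neg at hno
      apply hne
      apply List.ext_getElem hul
      intro n h1 h2
      have := hno n h1
      rwa [List.getD_eq_getElem _ _ h1, List.getD_eq_getElem _ _ h2] at this
    obtain ⟨i, hi, hne'⟩ := hex
    rw [List.getD_eq_getElem _ _ hi, List.getD_eq_getElem _ _ (hul ▸ hi)] at hne'
    have hlt : u[i] + 1 ≤ w[i]'(hul ▸ hi) := by
      have h1 := hptw i hi
      have h2 : u[i] < w[i]'(hul ▸ hi) := lt_of_le_of_ne h1 hne'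
      exact h2
    refine ⟨i, hi, ?_⟩
    set v := u.set i (u[i] + 1) with hv
    have hvlen : v.length = u.length := List.length_set
    have huv : CompLE u v := by
      apply compLE_of_forall₂
      rw [List.forall₂_iff_get]
      refine ⟨hvlen.symm, ?_⟩
      intro j h1 h2
      simp only [List.get_eq_getElem, hv, List.getElem_set]
      split
      · next heq =>
        subst heq
        exact le_of_lt (PNat.lt_add_one_iff.mpr le_rfl)
      · exact le_refl _
    have hvw : CompLE v w := by
      apply compLE_of_forall₂
      rw [List.forall₂_iff_get]
      refine ⟨by rw [hvlen, hul], ?_⟩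
      intro j h1 h2
      simp only [List.get_eq_getElem, hv, List.getElem_set]
      split
      · next heq => subst heq; exact hlt
      · exact hptw j (by omega)
    have hvne : v ≠ u := by
      intro heq
      have := congrArg (fun l => l.getD i 1) heq
      simp only [hv] at this
      rw [List.getD_eq_getElem _ _ (by rw [List.length_set]; exact hi),
        List.getD_eq_getElem _ _ hi, List.getElem_set, if_pos rfl] at this
      have : (u[i] : ℕ) + 1 = (u[i] : ℕ) := by exact_mod_cast this
      omega
    rcases hcov v huv hvw with h1 | h1
    · exact absurd h1 hvne
    · exact h1.symm
  · -- strict sublist case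
    right
    have hlt : l.length < w.length := lt_of_le_of_ne hsub.length_le hlen
    obtain ⟨p, hp, hsub'⟩ := sublist_eraseIdx_of_lt hsub hlt
    have hwpos : 0 < w.length := by omega
    have huv : CompLE u (w.eraseIdx p) := List.sublistForall₂_iff.mpr ⟨l, hfa, hsub'⟩
    have hvw : CompLE (w.eraseIdx p) w := compLE_of_sublist (List.eraseIdx_sublist w p)
    have hvne : w.eraseIdx p ≠ w := by
      intro heq
      have := congrArg List.length heq
      rw [List.length_eraseIdx, if_pos hp] at this
      omega
    have hu : u = w.eraseIdx p := by
      rcases hcov _ huv hvw with h1 | h1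
      · exact h1.symm
      · exact absurd h1 hvne
    refine ⟨p, hp, ?_, hu⟩
    -- show w[p] = 1 using v' = w.set p 1
    set v' := w.set p 1 with hv'
    have hsubv' : List.Sublist (w.eraseIdx p) v' := by
      rw [hv', List.set_eq_take_cons_drop 1 hp, List.eraseIdx_eq_take_drop_succ]
      exact List.Sublist.append (List.Sublist.refl _) (List.sublist_cons_self _ _)
    have huv' : CompLE u v' := by rw [hu]; exact compLE_of_sublist hsubv'
    have hv'w : CompLE v' w := by
      apply compLE_of_forall₂
      rw [List.forall₂_iff_get]
      refine ⟨List.length_set, ?_⟩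
      intro j h1 h2
      simp only [List.get_eq_getElem, hv', List.getElem_set]
      split
      · exact PNat.one_le _
      · exact le_refl _
    have hv'ne : v' ≠ u := by
      intro heq
      have := congrArg List.length heq
      rw [hv', List.length_set, hu, List.length_eraseIdx, if_pos hp] at this
      omega
    rcases hcov v' huv' hv'w with h1 | h1
    · exact absurd h1 hv'ne
    · have := congrArg (fun l => l.getD p 1) h1
      simp only [hv'] at this
      rw [List.getD_eq_getElem _ _ (by rw [List.length_set]; exact hp),
        List.getD_eq_getElem _ _ hp, List.getElem_set, if_pos rfl] at this
      exact this.symm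


lemma caseA_unique (u w : List ℕ+) (hlen : u.length = w.length)
    (η : List ℕ) (hn : NormalEmb u (coes w) η) : η = coes u := by
  have h1 : η.length = w.length := by rw [hn.1.1, coes_length]
  have h2 := hn.1.2.1
  have h3 : (η.filter (fun x => decide (x ≠ 0))).length = η.length := by
    rw [h2, coes_length, hlen, h1]
  have h4 := List.filter_eq_self.mpr (List.length_filter_eq_length_iff.mp h3)
  rw [← h4, h2]

lemma caseA_normal (u w : List ℕ+) (i : ℕ) (hi : i < u.length)
    (hw : w = u.set i (u[i] + 1)) : NormalEmb u (coes w) (coes u) := by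
  have hlen : w.length = u.length := by rw [hw, List.length_set]
  have hwj : ∀ j (hj : j < u.length),
      (w[j]'(by omega) : ℕ) = if i = j then (u[j]'hj : ℕ) + 1 else (u[j]'hj : ℕ) := by
    intro j hj
    have : w[j]'(by omega) = (u.set i (u[i] + 1))[j]'(by rw [List.length_set]; exact hj) := by
      congr 1
    rw [this, List.getElem_set]
    split
    · next heq =>
      subst heq
      rw [PNat.add_coe, PNat.one_coe]
    · rfl
  refine ⟨⟨?_, ?_, ?_⟩, ?_, ?_⟩
  · rw [coes_length, coes_length, hlen]
  · exact List.filter_eq_self.mpr (fun a ha => by simpa using coes_ne_zero u a ha)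
  · intro j
    rcases lt_or_ge j u.length with hj | hj
    · rw [coes_getD u hj, coes_getD w (by omega), hwj j hj]
      split <;> omega
    · rw [List.getD_eq_default _ _ (by rw [coes_length]; exact hj),
        List.getD_eq_default _ _ (by rw [coes_length]; omega)]
  · intro j hj
    rw [coes_length, hlen] at hj
    rw [coes_getD u hj, coes_getD w (by omega), hwj j hj]
    split
    · right; left; omega
    · left; rfl
  · intro k r t hrun
    have hr0 : r ≤ t := hrun.1
    have ht : t < u.length := by
      have := hrun.2.1
      rwa [coes_length, hlen] at this
    constructor
    · intro _ i' h1 h2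
      exact (coes_pos u (by omega)).ne'
    · intro _
      exact (coes_pos u (by omega : r < u.length)).ne'

lemma caseB (u w : List ℕ+) (p : ℕ) (hp : p < w.length) (hwp : w[p] = 1)
    (hu : u = w.eraseIdx p) : ∃! η, NormalEmb u (coes w) η := by
  classical
  set W := coes w with hWdef
  have hWlen : W.length = w.length := coes_length w
  have hWp : W.getD p 0 = 1 := by rw [hWdef, coes_getD w hp, hwp]; rfl
  obtain ⟨r, t, hrun, hrp, hpt⟩ := exists_run W 1 p (by omega) hWp
  have hrt : r ≤ t := hrun.1
  have htlen : t < W.length := hrun.2.1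
  have hconst := hrun.2.2.1
  have hstart := hrun.2.2.2.1
  have hrW : r < W.length := by omega
  have hWr1 : W.getD r 0 = 1 := hconst r le_rfl hrt
  have hcoesu : coes u = W.eraseIdx p := by rw [hu]; exact coes_eraseIdx w p
  have herase : W.eraseIdx r = W.eraseIdx p :=
    eraseIdx_eq_of_const W hrp (by omega) (fun j h1 h2 => hconst j h1 (by omega))
  have hηget : ∀ j, j < W.length → (W.set r 0).getD j 0 = if r = j then 0 else W.getD j 0 := by
    intro j hj
    rw [List.getD_eq_getElem _ _ (by rw [List.length_set]; exact hj), List.getElem_set]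
    split
    · rfl
    · exact (List.getD_eq_getElem _ _ hj).symm
  have hηout : ∀ j, W.length ≤ j → (W.set r 0).getD j 0 = 0 := fun j hj =>
    List.getD_eq_default _ _ (by rw [List.length_set]; exact hj)
  refine ⟨W.set r 0, ⟨⟨List.length_set, ?_, ?_⟩, ?_, ?_⟩, ?_⟩
  · rw [filter_set_zero W (coes_ne_zero w) r hrW, herase, ← hcoesu]
  · intro j
    rcases lt_or_ge j W.length with hj | hj
    · rw [hηget j hj]
      split
      · exact Nat.zero_le _
      · exact le_refl _
    · rw [hηout j hj]
      exact Nat.zero_le _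
  · intro j hj
    rw [hηget j hj]
    split
    · right; right; rfl
    · left; rfl
  · intro k r' t' hrun'
    have hrt' : r' ≤ t' := hrun'.1
    have htlen' : t' < W.length := hrun'.2.1
    have hconst' := hrun'.2.2.1
    constructor
    · intro hk1 i h1 h2
      rw [hηget i (by omega)]
      split
      · next heq =>
        -- r = i with r' < i ≤ t' : contradiction with r being a run start
        exfalso
        have hW1 : W.getD (r - 1) 0 = 1 := by
          have := hconst' (r - 1) (by omega) (by omega)
          rwa [hk1] at this
        rcases hstart with h0 | hne
        · omega
        · exact hne hW1
      · have := hconst' i (by omega) h2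
        rw [this, hk1]
        omega
    · intro hk2
      rw [hηget r' (by omega)]
      split
      · next heq =>
        exfalso
        have := hconst' r' le_rfl hrt'
        rw [← heq] at this
        rw [hWr1] at this
        omega
      · have := hconst' r' le_rfl hrt'
        omega
  · -- uniqueness
    intro η' hn'
    have hlen' : η'.length = W.length := hn'.1.1
    have hfilt' : η'.filter (fun x => decide (x ≠ 0)) = coes u := hn'.1.2.1
    have hle' : ∀ i, η'.getD i 0 ≤ W.getD i 0 := hn'.1.2.2
    have hulen : u.length = w.length - 1 := by
      rw [hu, List.length_eraseIdx, if_pos hp]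
    have hzero : ∃ j, j < η'.length ∧ η'.getD j 0 = 0 := by
      by_contra hc
      push_neg at hc
      have hself : η'.filter (fun x => decide (x ≠ 0)) = η' := by
        apply List.filter_eq_self.mpr
        intro a ha
        obtain ⟨n, hn, rfl⟩ := List.getElem_of_mem ha
        have := hc n hn
        rw [List.getD_eq_getElem _ _ hn] at this
        simpa using this
      rw [hself] at hfilt'
      have := congrArg List.length hfilt'
      rw [coes_length] at this
      omega
    obtain ⟨j, hjlen, hjz⟩ := hzero
    have hjW : j < W.length := by omega
    have hfa : List.Forall₂ (· ≤ ·) η' W := by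
      rw [List.forall₂_iff_get]
      refine ⟨hlen', ?_⟩
      intro n h1 h2
      have := hle' n
      simp only [List.get_eq_getElem]
      rwa [List.getD_eq_getElem _ _ h1, List.getD_eq_getElem _ _ h2] at this
    have hsum1 : η'.sum = (coes u).sum := by rw [← hfilt', sum_filter_ne_zero]
    have hsum2 : (coes u).sum + 1 = W.sum := by
      have h' := sum_eraseIdx' W p (by omega)
      rw [hcoesu, ← hWp]
      exact h'
    have hzip := sum_add_zip η' W hfa
    have hDsum : (List.zipWith (· - ·) W η').sum = 1 := by omega
    have hDget : ∀ n, n < W.length →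
        (List.zipWith (· - ·) W η').getD n 0 = W.getD n 0 - η'.getD n 0 := by
      intro n hn
      have hlt : n < (List.zipWith (· - ·) W η').length := by
        rw [List.length_zipWith, hlen']
        omega
      rw [List.getD_eq_getElem _ _ hlt, List.getElem_zipWith,
        List.getD_eq_getElem _ _ hn, List.getD_eq_getElem _ _ (by omega : n < η'.length)]
    have hDj : (List.zipWith (· - ·) W η').getD j 0 = W.getD j 0 := by
      rw [hDget j hjW, hjz, Nat.sub_zero]
    have hWjpos : 0 < W.getD j 0 := coes_pos w (by omega)
    have hWj1 : W.getD j 0 = 1 := by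
      have := getD_le_sum (List.zipWith (· - ·) W η') j
      omega
    have hother : ∀ n, n < W.length → n ≠ j → η'.getD n 0 = W.getD n 0 := by
      intro n hn hnj
      have h1 := getD_add_getD_le_sum (List.zipWith (· - ·) W η') n j hnj
      have h2 := hDget n hn
      have h3 := hle' n
      omega
    have hηeq : η' = W.set j 0 := by
      apply List.ext_getElem (by rw [hlen', List.length_set])
      intro n h1 h2
      rw [List.getElem_set]
      by_cases hnj : j = n
      · rw [if_pos hnj, ← List.getD_eq_getElem η' 0 h1, ← hnj]
        exact hjz
      · rw [if_neg hnj, ← List.getD_eq_getElem η' 0 h1, ← List.getD_eq_getElem W 0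
          (by rw [List.length_set] at h2; exact h2)]
        exact hother n (by omega) (fun h => hnj h.symm)
    have hjstart := normal_zero_start hn' hjW hWj1 hjz
    have hej : W.eraseIdx j = W.eraseIdx r := by
      rw [herase, ← hcoesu, ← hfilt', hηeq, filter_set_zero W (coes_ne_zero w) j hjW]
    have hjr : j = r := start_unique W j r hjW hrW hWj1 hWr1 hjstart hstart hej
    rw [hηeq, hjr]

/-- If `w` covers `u` in ℙ*, then there is exactly one normal embedding of `u`
into `w`; moreover, if this embedding turns an entry `1` of `w` into `0`, that
entry is the first element of its run of `1`'s in `w` (i.e. `i = 0` or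
`w(i-1) ≠ 1`). -/
theorem cover_unique_normal_embedding (u w : List ℕ+) (h : CompCovBy w u) :
    (∃! η : List ℕ, NormalEmb u (coes w) η) ∧
    ∀ η : List ℕ, NormalEmb u (coes w) η →
      ∀ i, i < w.length → (coes w).getD i 0 = 1 → η.getD i 0 = 0 →
        (i = 0 ∨ (coes w).getD (i - 1) 0 ≠ 1) := by
  constructor
  · rcases cover_struct h with ⟨i, hi, hw⟩ | ⟨p, hp, hwp, hu⟩
    · refine ⟨coes u, caseA_normal u w i hi hw, ?_⟩
      intro η hn
      exact caseA_unique u w (by rw [hw, List.length_set]) η hn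
    · exact caseB u w p hp hwp hu
  · intro η hn i hi hW1 hz
    exact normal_zero_start hn (by rw [coes_length]; exact hi) hW1 hz
end

section
/- The map sending a composition (c_1,…,c_k) ∈ ℙ* to the layered permutation that is the direct sum of decreasing permutations of lengths c_1,…,c_k is an order isomorphism from the composition poset ℙ* onto the set of layered permutations ordered by pattern containment. -/
/-- The direct sum `σ ⊕ π` of permutations: the permutation of length `m + n`
whose first `m` values form `σ` and whose last `n` values are
`π(1)+m, …, π(n)+m`. -/
def permDirectSum {m n : ℕ} (σ : Equiv.Perm (Fin m)) (π : Equiv.Perm (Fin n)) :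
    Equiv.Perm (Fin (m + n)) :=
  (finSumFinEquiv.symm.trans ((Equiv.sumCongr σ π).trans finSumFinEquiv))

/-- The layered permutation associated to a composition `(c₁, …, c_k)`: the
direct sum of decreasing permutations of lengths `c₁, …, c_k`. -/
def layeredPerm : List ℕ+ → Σ n : ℕ, Equiv.Perm (Fin n)
  | [] => ⟨0, Equiv.refl _⟩
  | c :: cs => ⟨(c : ℕ) + (layeredPerm cs).1,
      permDirectSum (Fin.revPerm : Equiv.Perm (Fin (c : ℕ))) (layeredPerm cs).2⟩

/-- Pattern containment order on permutations of arbitrary lengths: `σ ≤ π`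
iff there are indices `i₁ < … < i_l` such that the subsequence
`π(i₁) … π(i_l)` has the same pairwise comparisons as `σ(1) … σ(l)`. -/
def PatternLE (p q : Σ n : ℕ, Equiv.Perm (Fin n)) : Prop :=
  ∃ f : Fin p.1 → Fin q.1, StrictMono f ∧
    ∀ a b : Fin p.1, p.2 a < p.2 b ↔ q.2 (f a) < q.2 (f b)

theorem pds_lt {m n : ℕ} (σ : Equiv.Perm (Fin m)) (π : Equiv.Perm (Fin n)) (x : Fin (m+n)) (h : (x:ℕ) < m) :
    ((permDirectSum σ π x : Fin (m+n)) : ℕ) = (σ ⟨x, h⟩ : ℕ) := by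
  have e : x = Fin.castAdd n ⟨(x:ℕ), h⟩ := Fin.ext rfl
  refine (congrArg (fun y => ((permDirectSum σ π) y : ℕ)) e).trans ?_
  simp only [permDirectSum, Equiv.trans_apply, finSumFinEquiv_symm_apply_castAdd,
    Equiv.sumCongr_apply, Sum.map_inl, finSumFinEquiv_apply_left, Fin.coe_castAdd]

theorem pds_ge {m n : ℕ} (σ : Equiv.Perm (Fin m)) (π : Equiv.Perm (Fin n)) (x : Fin (m+n)) (h : m ≤ (x:ℕ)) :
    ((permDirectSum σ π x : Fin (m+n)) : ℕ) = m + (π ⟨(x:ℕ) - m, by omega⟩ : ℕ) := by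
  have e : x = Fin.natAdd m ⟨(x:ℕ) - m, by omega⟩ := Fin.ext (by simp; omega)
  refine (congrArg (fun y => ((permDirectSum σ π) y : ℕ)) e).trans ?_
  simp only [permDirectSum, Equiv.trans_apply, finSumFinEquiv_symm_apply_natAdd,
    Equiv.sumCongr_apply, Sum.map_inr, finSumFinEquiv_apply_right, Fin.coe_natAdd]

theorem rev_val (n : ℕ) (i : Fin n) : ((Fin.revPerm i : Fin n) : ℕ) = n - ((i:ℕ)+1) := by
  simp [Fin.val_rev]

-- value lemmas for layeredPerm
theorem lp_val_lt (a : ℕ+) (cs : List ℕ+) (x : Fin (layeredPerm (a::cs)).1)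
    (h : (x:ℕ) < (a:ℕ)) :
    (((layeredPerm (a::cs)).2 x : Fin (layeredPerm (a::cs)).1) : ℕ) = (a:ℕ) - ((x:ℕ)+1) :=
  (pds_lt Fin.revPerm (layeredPerm cs).2 x h).trans (rev_val _ _)

theorem lp_val_ge (a : ℕ+) (cs : List ℕ+) (x : Fin (layeredPerm (a::cs)).1)
    (h : (a:ℕ) ≤ (x:ℕ)) :
    (((layeredPerm (a::cs)).2 x : Fin (layeredPerm (a::cs)).1) : ℕ)
      = (a:ℕ) + (((layeredPerm cs).2 ⟨(x:ℕ) - (a:ℕ),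
          by have := x.isLt; have h2 : (x:ℕ) < (a:ℕ) + (layeredPerm cs).1 := this; omega⟩ :
          Fin (layeredPerm cs).1) : ℕ) :=
  pds_ge Fin.revPerm (layeredPerm cs).2 x h

theorem lp_val_shift (a : ℕ+) (cs : List ℕ+) (x : Fin (layeredPerm (a::cs)).1)
    (j : Fin (layeredPerm cs).1) (hx : (x:ℕ) = (a:ℕ) + (j:ℕ)) :
    (((layeredPerm (a::cs)).2 x : Fin (layeredPerm (a::cs)).1) : ℕ)
      = (a:ℕ) + (((layeredPerm cs).2 j : Fin (layeredPerm cs).1) : ℕ) := by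
  rw [lp_val_ge a cs x (by omega)]
  exact congrArg (fun t => (a:ℕ) + (((layeredPerm cs).2 t : Fin (layeredPerm cs).1) : ℕ))
    (Fin.ext (by simp [hx]))

theorem strictMono_val_le {p q : ℕ} {f : Fin p → Fin q} (hf : StrictMono f) :
    ∀ i : Fin p, (i:ℕ) ≤ ((f i : Fin q) : ℕ) := by
  intro i
  obtain ⟨i, hi⟩ := i
  induction i with
  | zero => exact Nat.zero_le _
  | succ k ih =>
    have hk : k < p := Nat.lt_of_succ_lt hi
    have h1 : ((f ⟨k, hk⟩ : Fin q) : ℕ) < ((f ⟨k+1, hi⟩ : Fin q) : ℕ) :=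
      hf (show (⟨k, hk⟩ : Fin p) < ⟨k+1, hi⟩ from Nat.lt_succ_self k)
    have h2 : k ≤ ((f ⟨k, hk⟩ : Fin q) : ℕ) := ih hk
    show k + 1 ≤ _
    omega

theorem patternLE_skip (b : ℕ+) {u w : List ℕ+}
    (h : PatternLE (layeredPerm u) (layeredPerm w)) :
    PatternLE (layeredPerm u) (layeredPerm (b::w)) := by
  obtain ⟨f, hmono, hpat⟩ := h
  refine ⟨fun x => (Fin.natAdd (b:ℕ) (f x) : Fin (layeredPerm (b::w)).1), ?_, ?_⟩
  · intro x y hxy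
    have h1 : ((f x : Fin (layeredPerm w).1) : ℕ) < ((f y : Fin (layeredPerm w).1) : ℕ) :=
      hmono hxy
    show (b:ℕ) + _ < (b:ℕ) + _
    omega
  · intro x y
    rw [hpat x y, Fin.lt_def, Fin.lt_def,
      lp_val_shift b w (Fin.natAdd (b:ℕ) (f x)) (f x) rfl,
      lp_val_shift b w (Fin.natAdd (b:ℕ) (f y)) (f y) rfl]
    omega

theorem patternLE_cons {a b : ℕ+} {u w : List ℕ+} (hab : a ≤ b)
    (h : PatternLE (layeredPerm u) (layeredPerm w)) :
    PatternLE (layeredPerm (a::u)) (layeredPerm (b::w)) := by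
  obtain ⟨f, hmono, hpat⟩ := h
  have hab' : (a:ℕ) ≤ (b:ℕ) := by exact_mod_cast hab
  refine ⟨fun x => (Fin.addCases (motive := fun _ => Fin ((b:ℕ) + (layeredPerm w).1))
      (fun i : Fin (a:ℕ) => (Fin.castAdd (layeredPerm w).1 (Fin.castLE hab' i) : Fin (layeredPerm (b::w)).1))
      (fun j : Fin (layeredPerm u).1 => (Fin.natAdd (b:ℕ) (f j) : Fin (layeredPerm (b::w)).1)) x), ?_, ?_⟩
  · intro x y hxy
    have hxy' : (x:ℕ) < (y:ℕ) := hxy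
    induction x using Fin.addCases with
    | left i =>
      induction y using Fin.addCases with
      | left i' =>
        simp only [Fin.addCases_left]
        show ((Fin.castAdd (layeredPerm w).1 (Fin.castLE hab' i)) : Fin _) < _
        rw [Fin.lt_def]
        simpa using hxy'
      | right j' =>
        simp only [Fin.addCases_left, Fin.addCases_right]
        change ((Fin.castAdd (layeredPerm w).1 (Fin.castLE hab' i) : Fin ((b:ℕ) + (layeredPerm w).1)) : ℕ) < ((Fin.natAdd (b:ℕ) (f j') : Fin ((b:ℕ) + (layeredPerm w).1)) : ℕ)
        simp only [Fin.coe_castAdd, Fin.coe_castLE, Fin.coe_natAdd]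
        have := i.isLt
        omega
    | right j =>
      induction y using Fin.addCases with
      | left i' =>
        exfalso
        simp only [Fin.coe_castAdd, Fin.coe_natAdd] at hxy'
        have := i'.isLt
        omega
      | right j' =>
        simp only [Fin.addCases_right]
        change ((Fin.natAdd (b:ℕ) (f j) : Fin ((b:ℕ) + (layeredPerm w).1)) : ℕ) < ((Fin.natAdd (b:ℕ) (f j') : Fin ((b:ℕ) + (layeredPerm w).1)) : ℕ)
        simp only [Fin.coe_natAdd]
        have hj : (j:ℕ) < (j':ℕ) := by
          simp only [Fin.coe_natAdd] at hxy'; omega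
        have := hmono (show j < j' from hj)
        have hv : ((f j : Fin (layeredPerm w).1) : ℕ) < ((f j' : Fin (layeredPerm w).1) : ℕ) := this
        omega
  · intro x y
    rw [Fin.lt_def, Fin.lt_def]
    induction x using Fin.addCases with
    | left i =>
      have hxval : (((layeredPerm (a::u)).2 (Fin.castAdd (layeredPerm u).1 i) :
          Fin (layeredPerm (a::u)).1) : ℕ) = (a:ℕ) - ((i:ℕ)+1) := by
        exact lp_val_lt a u (Fin.castAdd (layeredPerm u).1 i) i.isLt
      have hfxval : (((layeredPerm (b::w)).2 (Fin.castAdd (layeredPerm w).1 (Fin.castLE hab' i)) :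
          Fin (layeredPerm (b::w)).1) : ℕ) = (b:ℕ) - ((i:ℕ)+1) := by
        exact lp_val_lt b w (Fin.castAdd (layeredPerm w).1 (Fin.castLE hab' i)) (lt_of_lt_of_le i.isLt hab')
      induction y using Fin.addCases with
      | left i' =>
        have hyval : (((layeredPerm (a::u)).2 (Fin.castAdd (layeredPerm u).1 i') :
            Fin (layeredPerm (a::u)).1) : ℕ) = (a:ℕ) - ((i':ℕ)+1) := by
          exact lp_val_lt a u (Fin.castAdd (layeredPerm u).1 i') i'.isLt
        have hfyval : (((layeredPerm (b::w)).2 (Fin.castAdd (layeredPerm w).1 (Fin.castLE hab' i')) :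
            Fin (layeredPerm (b::w)).1) : ℕ) = (b:ℕ) - ((i':ℕ)+1) := by
          exact lp_val_lt b w (Fin.castAdd (layeredPerm w).1 (Fin.castLE hab' i')) (lt_of_lt_of_le i'.isLt hab')
        simp only [Fin.addCases_left]
        rw [hxval, hyval, hfxval, hfyval]
        have := i.isLt; have := i'.isLt
        omega
      | right j' =>
        have hyval := lp_val_shift a u (Fin.natAdd (a:ℕ) j') j' rfl
        have hfyval := lp_val_shift b w (Fin.natAdd (b:ℕ) (f j')) (f j') rfl
        simp only [Fin.addCases_left, Fin.addCases_right]
        rw [hxval, hyval, hfxval, hfyval]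
        omega
    | right j =>
      have hxval := lp_val_shift a u (Fin.natAdd (a:ℕ) j) j rfl
      have hfxval := lp_val_shift b w (Fin.natAdd (b:ℕ) (f j)) (f j) rfl
      induction y using Fin.addCases with
      | left i' =>
        have hyval : (((layeredPerm (a::u)).2 (Fin.castAdd (layeredPerm u).1 i') :
            Fin (layeredPerm (a::u)).1) : ℕ) = (a:ℕ) - ((i':ℕ)+1) := by
          exact lp_val_lt a u (Fin.castAdd (layeredPerm u).1 i') i'.isLt
        have hfyval : (((layeredPerm (b::w)).2 (Fin.castAdd (layeredPerm w).1 (Fin.castLE hab' i')) :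
            Fin (layeredPerm (b::w)).1) : ℕ) = (b:ℕ) - ((i':ℕ)+1) := by
          exact lp_val_lt b w (Fin.castAdd (layeredPerm w).1 (Fin.castLE hab' i')) (lt_of_lt_of_le i'.isLt hab')
        simp only [Fin.addCases_left, Fin.addCases_right]
        rw [hxval, hyval, hfxval, hfyval]
        have := i'.isLt
        omega
      | right j' =>
        have hyval := lp_val_shift a u (Fin.natAdd (a:ℕ) j') j' rfl
        have hfyval := lp_val_shift b w (Fin.natAdd (b:ℕ) (f j')) (f j') rfl
        simp only [Fin.addCases_right]
        rw [hxval, hyval, hfxval, hfyval]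
        have hp := hpat j j'
        rw [Fin.lt_def, Fin.lt_def] at hp
        omega

theorem compLE_backward : ∀ (w u : List ℕ+), PatternLE (layeredPerm u) (layeredPerm w) → CompLE u w := by
  intro w
  induction w with
  | nil =>
    intro u h
    cases u with
    | nil => exact List.SublistForall₂.nil
    | cons a u' =>
      obtain ⟨f, -, -⟩ := h
      exact Fin.elim0
        (f (Fin.castAdd (layeredPerm u').1 ⟨0, a.property⟩ : Fin (layeredPerm (a::u')).1))
  | cons b w' ih =>
    intro u h
    cases u with
    | nil => exact List.SublistForall₂.nil
    | cons a u' =>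
      obtain ⟨f, hmono, hpat⟩ := h
      have apos : 0 < (a:ℕ) := a.property
      have bpos : 0 < (b:ℕ) := b.property
      let posL : Fin (a:ℕ) → Fin (layeredPerm (a::u')).1 :=
        fun i => Fin.castAdd (layeredPerm u').1 i
      let posR : Fin (layeredPerm u').1 → Fin (layeredPerm (a::u')).1 :=
        fun j => Fin.natAdd (a:ℕ) j
      have hposL : ∀ i, ((posL i : Fin (layeredPerm (a::u')).1) : ℕ) = (i:ℕ) := fun _ => rfl
      have hposR : ∀ j, ((posR j : Fin (layeredPerm (a::u')).1) : ℕ) = (a:ℕ) + (j:ℕ) :=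
        fun _ => rfl
      let i0 : Fin (a:ℕ) := ⟨0, apos⟩
      have hi0 : (i0 : ℕ) = 0 := rfl
      let ila : Fin (a:ℕ) := ⟨(a:ℕ)-1, by omega⟩
      have hila : (ila : ℕ) = (a:ℕ) - 1 := rfl
      have hfub : ∀ x : Fin (layeredPerm (a::u')).1,
          ((f x : Fin (layeredPerm (b::w')).1) : ℕ) < (b:ℕ) + (layeredPerm w').1 :=
        fun x => (f x).isLt
      have hσL : ∀ i : Fin (a:ℕ),
          (((layeredPerm (a::u')).2 (posL i) : Fin (layeredPerm (a::u')).1) : ℕ)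
            = (a:ℕ) - ((i:ℕ)+1) := by
        intro i
        rw [lp_val_lt a u' (posL i) (by rw [hposL]; exact i.isLt), hposL]
      have hσR : ∀ j : Fin (layeredPerm u').1,
          (((layeredPerm (a::u')).2 (posR j) : Fin (layeredPerm (a::u')).1) : ℕ)
            = (a:ℕ) + (((layeredPerm u').2 j : Fin (layeredPerm u').1) : ℕ) :=
        fun j => lp_val_shift a u' (posR j) j (hposR j)
      by_cases hb : ((f (posL i0) : Fin (layeredPerm (b::w')).1) : ℕ) < (b:ℕ)
      · -- first layer of u maps into first layer of w
        have claimA : ∀ i : Fin (a:ℕ), ((f (posL i) : Fin (layeredPerm (b::w')).1) : ℕ) < (b:ℕ) := by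
          intro i
          by_contra hge
          push_neg at hge
          rcases Nat.eq_zero_or_pos (i:ℕ) with hz | hpos
          · have : i = i0 := Fin.ext (by rw [hi0]; exact hz)
            rw [this] at hge
            omega
          · have h1 : (layeredPerm (a::u')).2 (posL i) < (layeredPerm (a::u')).2 (posL i0) := by
              rw [Fin.lt_def, hσL i, hσL i0, hi0]
              have := i.isLt
              omega
            have h2 := (hpat _ _).mp h1
            rw [Fin.lt_def, lp_val_ge b w' (f (posL i)) hge,
              lp_val_lt b w' (f (posL i0)) hb] at h2
            omega
        have claimB : ∀ j : Fin (layeredPerm u').1,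
            (b:ℕ) ≤ ((f (posR j) : Fin (layeredPerm (b::w')).1) : ℕ) := by
          intro j
          by_contra hlt
          push_neg at hlt
          have h1 : (layeredPerm (a::u')).2 (posL ila) < (layeredPerm (a::u')).2 (posR j) := by
            rw [Fin.lt_def, hσL ila, hσR j, hila]
            omega
          have h2 := (hpat _ _).mp h1
          rw [Fin.lt_def, lp_val_lt b w' (f (posL ila)) (claimA ila),
            lp_val_lt b w' (f (posR j)) hlt] at h2
          have h3 : posL ila < posR j := by
            rw [Fin.lt_def, hposL, hposR, hila]
            omega
          have h4 := hmono h3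
          rw [Fin.lt_def] at h4
          have h5 := claimA ila
          omega
        have hineq : (a:ℕ) ≤ (b:ℕ) := by
          have h1 := strictMono_val_le hmono (posL ila)
          rw [hposL, hila] at h1
          have h2 := claimA ila
          omega
        let f' : Fin (layeredPerm u').1 → Fin (layeredPerm w').1 := fun j =>
          ⟨((f (posR j) : Fin (layeredPerm (b::w')).1) : ℕ) - (b:ℕ), by
            have := hfub (posR j); have := claimB j; omega⟩
        have hf'val : ∀ j, ((f' j : Fin (layeredPerm w').1) : ℕ)
            = ((f (posR j) : Fin (layeredPerm (b::w')).1) : ℕ) - (b:ℕ) := fun _ => rfl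
        refine List.SublistForall₂.cons (by exact_mod_cast hineq) (ih u' ⟨f', ?_, ?_⟩)
        · intro j1 j2 hj
          have hj' : (j1:ℕ) < (j2:ℕ) := hj
          have h3 : posR j1 < posR j2 := by
            rw [Fin.lt_def, hposR, hposR]
            omega
          have h4 := hmono h3
          rw [Fin.lt_def] at h4
          have h5 := claimB j1
          rw [Fin.lt_def, hf'val, hf'val]
          omega
        · intro j1 j2
          have h5 := hpat (posR j1) (posR j2)
          rw [Fin.lt_def, Fin.lt_def, hσR j1, hσR j2,
            lp_val_shift b w' (f (posR j1)) (f' j1) (by rw [hf'val]; have := claimB j1; omega),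
            lp_val_shift b w' (f (posR j2)) (f' j2) (by rw [hf'val]; have := claimB j2; omega)] at h5
          rw [Fin.lt_def, Fin.lt_def]
          omega
      · -- everything maps into the tail of w
        push_neg at hb
        have hall : ∀ x : Fin (layeredPerm (a::u')).1,
            (b:ℕ) ≤ ((f x : Fin (layeredPerm (b::w')).1) : ℕ) := by
          intro x
          rcases Nat.eq_zero_or_pos (x:ℕ) with hz | hp
          · have : x = posL i0 := Fin.ext (by rw [hposL, hi0]; exact hz)
            rw [this]
            exact hb
          · have h3 : posL i0 < x := by
              rw [Fin.lt_def, hposL, hi0]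
              exact hp
            have h4 := hmono h3
            rw [Fin.lt_def] at h4
            omega
        let F : Fin (layeredPerm (a::u')).1 → Fin (layeredPerm w').1 := fun x =>
          ⟨((f x : Fin (layeredPerm (b::w')).1) : ℕ) - (b:ℕ), by
            have := hfub x; have := hall x; omega⟩
        have hFval : ∀ x, ((F x : Fin (layeredPerm w').1) : ℕ)
            = ((f x : Fin (layeredPerm (b::w')).1) : ℕ) - (b:ℕ) := fun _ => rfl
        refine List.SublistForall₂.cons_right (ih (a::u') ⟨F, ?_, ?_⟩)
        · intro x y hxy
          have h4 := hmono hxy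
          rw [Fin.lt_def] at h4
          have h5 := hall x
          rw [Fin.lt_def, hFval, hFval]
          omega
        · intro x y
          have h5 := hpat x y
          simp only [Fin.lt_def] at h5 ⊢
          rw [lp_val_shift b w' (f x) (F x) (by rw [hFval]; have := hall x; omega),
            lp_val_shift b w' (f y) (F y) (by rw [hFval]; have := hall y; omega)] at h5
          omega

theorem compLE_forward {u w : List ℕ+} (h : CompLE u w) :
    PatternLE (layeredPerm u) (layeredPerm w) := by
  induction h with
  | nil => exact ⟨Fin.elim0, fun {x y} _ => x.elim0, fun x _ => x.elim0⟩
  | cons hab _ ih => exact patternLE_cons hab ih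
  | cons_right _ ih => exact patternLE_skip _ ih

theorem forall₂_le_antisymm : ∀ {u w : List ℕ+},
    List.Forall₂ (·≤·) u w → List.Forall₂ (·≤·) w u → u = w := by
  intro u w h1
  induction h1 with
  | nil => intro _; rfl
  | cons hab _ ih =>
    intro h2
    cases h2 with
    | cons hba h2' => rw [le_antisymm hab hba, ih h2']

theorem compLE_antisymm {u w : List ℕ+} (h1 : CompLE u w) (h2 : CompLE w u) : u = w := by
  rw [CompLE, List.sublistForall₂_iff] at h1 h2
  obtain ⟨l1, hf1, hs1⟩ := h1
  obtain ⟨l2, hf2, hs2⟩ := h2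
  have e1 := hf1.length_eq
  have e2 := hf2.length_eq
  have le1 := hs1.length_le
  have le2 := hs2.length_le
  have hl1 : l1 = w := hs1.eq_of_length (by omega)
  subst hl1
  have hl2 : l2 = u := hs2.eq_of_length (by omega)
  subst hl2
  exact forall₂_le_antisymm hf1 hf2

theorem patternLE_refl (p : Σ n : ℕ, Equiv.Perm (Fin n)) : PatternLE p p :=
  ⟨id, strictMono_id, fun _ _ => Iff.rfl⟩


/-- The map sending a composition to the direct sum of decreasing permutations
of lengths its parts is an order isomorphism from ℙ* onto the set of layered
permutations (the image of this map) ordered by pattern containment: it is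
injective, and `u ≤ w` in ℙ* iff the corresponding layered permutations are
related by pattern containment. -/
theorem layeredPerm_order_isomorphism :
    Function.Injective layeredPerm ∧
    ∀ u w : List ℕ+, CompLE u w ↔ PatternLE (layeredPerm u) (layeredPerm w) := by
  constructor
  · intro u w h
    exact compLE_antisymm (compLE_backward w u (h ▸ patternLE_refl _))
      (compLE_backward u w (h ▸ patternLE_refl _))
  · intro u w
    exact ⟨compLE_forward, compLE_backward w u⟩
end
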